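/- arXiv:2003.05360 — 10 statements merged into one kernel-verified Lean document; each statement's English description precedes it below -/
import Mathlib

section
/- Let α : [1,∞) → (0,∞) be Borel measurable. Then the following two conditions are equivalent: (i) there exist numbers b > 1 and c ≥ 1 such that c⁻¹ ≤ α(λt)/α(t) ≤ c for all t ≥ 1 and all λ ∈ [1,b]; (ii) there exist real numbers r₀ ≤ r₁ and positive numbers c₀, c₁ such that c₀·λ^{r₀} ≤ α(λt)/α(t) ≤ c₁·λ^{r₁} for all t ≥ 1 and all λ ≥ 1. -/
/-!
Passing to `g = log ∘ α`, condition (i) says that `g (l * t) - g t` is bounded by `log c` for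
`l ∈ [1, b]`. Writing a general `l ≥ 1` as a product of at most `⌈log_b l⌉` factors from `[1, b]`,
the triangle inequality bounds `|g (l * t) - g t|` by `log c · (1 + log_b l)`, which after
exponentiating is the power bound (ii) with `r₁ = -r₀ = log c / log b`. Conversely, on `[1, b]` the
powers `l ^ r` lie between `b ^ (-|r|)` and `b ^ |r|`.
-/

open Real Set

theorem abs_log_le_log_iff {x a : ℝ} (hx : 0 < x) (ha : 0 < a) :
    |log x| ≤ log a ↔ a⁻¹ ≤ x ∧ x ≤ a := by
  rw [abs_le, ← log_inv, log_le_log_iff (inv_pos.2 ha) hx, log_le_log_iff hx ha]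

theorem rpow_mem_Icc_of_mem_Icc {l b : ℝ} (hl : 1 ≤ l) (hlb : l ≤ b) (r : ℝ) :
    l ^ r ∈ Icc (b ^ (-|r|)) (b ^ |r|) :=
  ⟨(rpow_le_rpow_of_nonpos (by positivity) hlb (neg_nonpos.2 (abs_nonneg r))).trans
      (rpow_le_rpow_of_exponent_le hl (neg_abs_le r)),
    (rpow_le_rpow_of_exponent_le hl (le_abs_self r)).trans
      (rpow_le_rpow (by positivity) hlb (abs_nonneg r))⟩

section CoarseIncrement

variable {g : ℝ → ℝ} {b C : ℝ}

theorem abs_sub_le_mul_of_mem_Icc_pow (hb : 1 ≤ b)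
    (H : ∀ t, 1 ≤ t → ∀ l ∈ Icc 1 b, |g (l * t) - g t| ≤ C) (n : ℕ) :
    ∀ t, 1 ≤ t → ∀ l ∈ Icc 1 (b ^ n), |g (l * t) - g t| ≤ n * C := by
  induction n with
  | zero =>
    intro t _ l hl
    rw [pow_zero, Icc_self, mem_singleton_iff] at hl
    simp [hl]
  | succ n ih =>
    rintro t ht l ⟨hl, hlb⟩
    have hb₀ : 0 < b := one_pos.trans_le hb
    set m := max 1 (l / b)
    have hm : m ∈ Icc 1 (b ^ n) := by
      refine ⟨le_max_left _ _, max_le (one_le_pow₀ hb) ?_⟩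
      rwa [div_le_iff₀ hb₀, ← pow_succ]
    have hm₀ : 0 < m := one_pos.trans_le hm.1
    have hlm : l / m ∈ Icc 1 b := by
      refine ⟨(one_le_div hm₀).2 (max_le hl (div_le_self (by positivity) hb)), ?_⟩
      rw [div_le_iff₀ hm₀, ← div_le_iff₀' hb₀]
      exact le_max_right _ _
    have hlt : l * t = l / m * (m * t) := by
      field_simp [hm₀.ne']
    calc |g (l * t) - g t| ≤ |g (l / m * (m * t)) - g (m * t)| + |g (m * t) - g t| := by
          rw [hlt]; exact abs_sub_le _ _ _
      _ ≤ C + n * C := add_le_add (H _ (one_le_mul_of_one_le_of_one_le hm.1 ht) _ hlm)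
          (ih t ht m hm)
      _ = (n + 1 : ℕ) * C := by push_cast; ring

theorem abs_sub_le_add_mul_log (hb : 1 < b) (hC : 0 ≤ C)
    (H : ∀ t, 1 ≤ t → ∀ l ∈ Icc 1 b, |g (l * t) - g t| ≤ C) {t l : ℝ} (ht : 1 ≤ t) (hl : 1 ≤ l) :
    |g (l * t) - g t| ≤ C + C / log b * log l := by
  have hlogb : 0 ≤ logb b l := logb_nonneg hb hl
  set n := ⌈logb b l⌉₊
  have hln : l ≤ b ^ n := by
    rw [← rpow_natCast, ← logb_le_iff_le_rpow hb (by positivity)]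
    exact Nat.le_ceil _
  calc |g (l * t) - g t| ≤ n * C :=
        abs_sub_le_mul_of_mem_Icc_pow hb.le H n t ht l ⟨hl, hln⟩
    _ ≤ (logb b l + 1) * C := mul_le_mul_of_nonneg_right (Nat.ceil_lt_add_one hlogb).le hC
    _ = C + C / log b * log l := by rw [logb]; ring

end CoarseIncrement

theorem ratio_bounds_rpow_of_ratio_bounds_Icc {α : ℝ → ℝ} (hpos : ∀ t, 1 ≤ t → 0 < α t)
    {b c : ℝ} (hb : 1 < b) (hc : 1 ≤ c)
    (H : ∀ t, 1 ≤ t → ∀ l, 1 ≤ l → l ≤ b → c⁻¹ ≤ α (l * t) / α t ∧ α (l * t) / α t ≤ c)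
    {t l : ℝ} (ht : 1 ≤ t) (hl : 1 ≤ l) :
    c⁻¹ * l ^ (-(log c / log b)) ≤ α (l * t) / α t ∧
      α (l * t) / α t ≤ c * l ^ (log c / log b) := by
  have hratio : ∀ t, 1 ≤ t → ∀ l, 1 ≤ l → 0 < α (l * t) / α t := fun t ht l hl =>
    div_pos (hpos _ (one_le_mul_of_one_le_of_one_le hl ht)) (hpos t ht)
  have hlog : ∀ t, 1 ≤ t → ∀ l, 1 ≤ l →
      log (α (l * t)) - log (α t) = log (α (l * t) / α t) := fun t ht l hl =>
    (log_div (hpos _ (one_le_mul_of_one_le_of_one_le hl ht)).ne' (hpos t ht).ne').symm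
  have hc₀ : 0 < c := one_pos.trans_le hc
  have key := abs_sub_le_add_mul_log (g := fun t => log (α t)) hb (log_nonneg hc)
    (fun t ht l ⟨hl, hlb⟩ => by
      rw [hlog t ht l hl, abs_log_le_log_iff (hratio t ht l hl) hc₀]
      exact H t ht l hl hlb) ht hl
  have hexp : log c + log c / log b * log l = log (c * l ^ (log c / log b)) := by
    rw [log_mul hc₀.ne' (by positivity), log_rpow (by positivity)]
  rw [hlog t ht l hl, hexp, abs_log_le_log_iff (hratio t ht l hl) (by positivity)] at key
  rwa [mul_inv, ← rpow_neg (by positivity)] at key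

theorem exists_inv_le_and_le_of_rpow_bounds {b r₀ r₁ c₀ c₁ : ℝ} (hc₀ : 0 < c₀) (hc₁ : 0 ≤ c₁) :
    ∃ c, 1 ≤ c ∧ ∀ x l, 1 ≤ l → l ≤ b → c₀ * l ^ r₀ ≤ x → x ≤ c₁ * l ^ r₁ →
      c⁻¹ ≤ x ∧ x ≤ c := by
  refine ⟨max 1 (max (c₁ * b ^ |r₁|) (c₀ * b ^ (-|r₀|))⁻¹), le_max_left _ _,
    fun x l hl hlb h₀ h₁ => ⟨?_, ?_⟩⟩
  · have hb : 0 < b := one_pos.trans_le (hl.trans hlb)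
    calc _ ≤ c₀ * b ^ (-|r₀|) :=
          inv_le_of_inv_le₀ (by positivity) ((le_max_right _ _).trans (le_max_right _ _))
      _ ≤ c₀ * l ^ r₀ := by gcongr; exact (rpow_mem_Icc_of_mem_Icc hl hlb r₀).1
      _ ≤ x := h₀
  · calc x ≤ c₁ * l ^ r₁ := h₁
      _ ≤ c₁ * b ^ |r₁| := by gcongr; exact (rpow_mem_Icc_of_mem_Icc hl hlb r₁).2
      _ ≤ _ := (le_max_left _ _).trans (le_max_right _ _)

theorem stmt_0_general (α : ℝ → ℝ)
    (hpos : ∀ t, 1 ≤ t → 0 < α t) :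
    (∃ b : ℝ, 1 < b ∧ ∃ c : ℝ, 1 ≤ c ∧ ∀ t, 1 ≤ t → ∀ l, 1 ≤ l → l ≤ b →
        c⁻¹ ≤ α (l * t) / α t ∧ α (l * t) / α t ≤ c) ↔
    (∃ r₀ r₁ : ℝ, r₀ ≤ r₁ ∧ ∃ c₀ : ℝ, 0 < c₀ ∧ ∃ c₁ : ℝ, 0 < c₁ ∧
        ∀ t, 1 ≤ t → ∀ l, 1 ≤ l →
          c₀ * l ^ r₀ ≤ α (l * t) / α t ∧ α (l * t) / α t ≤ c₁ * l ^ r₁) := by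
  constructor
  · rintro ⟨b, hb, c, hc, H⟩
    have hr : 0 ≤ log c / log b := div_nonneg (log_nonneg hc) (log_pos hb).le
    exact ⟨_, _, neg_le_self hr, c⁻¹, by positivity, c, by positivity,
      fun t ht l hl => ratio_bounds_rpow_of_ratio_bounds_Icc hpos hb hc H ht hl⟩
  · rintro ⟨r₀, r₁, -, c₀, hc₀, c₁, hc₁, H⟩
    obtain ⟨c, hc, hbound⟩ :=
      exists_inv_le_and_le_of_rpow_bounds (b := 2) (r₀ := r₀) (r₁ := r₁) hc₀ hc₁.le
    exact ⟨2, one_lt_two, c, hc, fun t ht l hl hl2 =>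
      hbound _ l hl hl2 (H t ht l hl).1 (H t ht l hl).2⟩

/-- For a Borel measurable `α : [1,∞) → (0,∞)`, the defining condition of
the class OR (condition (i)) is equivalent to the two-sided power bound condition (ii). -/
theorem stmt_0 (α : ℝ → ℝ)
    (hmeas : Measurable ((Set.Ici (1:ℝ)).restrict α))
    (hpos : ∀ t, 1 ≤ t → 0 < α t) :
    (∃ b : ℝ, 1 < b ∧ ∃ c : ℝ, 1 ≤ c ∧ ∀ t, 1 ≤ t → ∀ l, 1 ≤ l → l ≤ b →
        c⁻¹ ≤ α (l * t) / α t ∧ α (l * t) / α t ≤ c) ↔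
    (∃ r₀ r₁ : ℝ, r₀ ≤ r₁ ∧ ∃ c₀ : ℝ, 0 < c₀ ∧ ∃ c₁ : ℝ, 0 < c₁ ∧
        ∀ t, 1 ≤ t → ∀ l, 1 ≤ l →
          c₀ * l ^ r₀ ≤ α (l * t) / α t ∧ α (l * t) / α t ≤ c₁ * l ^ r₁) :=
  stmt_0_general α hpos
end

section
/- A Borel measurable function α : [1,∞) → (0,∞) belongs to the class OR if and only if there exist Borel measurable, bounded, real-valued functions β and γ on [1,∞) such that α(t) = exp( β(t) + ∫₁ᵗ γ(τ)/τ dτ ) for all t ≥ 1. -/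
/-! Write `L = log α`. The OR condition says that `L` moves by a bounded amount between `t` and
`l t` for `1 ≤ l ≤ b`, and by iteration for `1 ≤ l ≤ e`. Conversely, a representation gives
`L (l t) - L t = β (l t) - β t + ∫_t^{l t} γ(τ)/τ dτ`, which is at most `2 ‖β‖ + ‖γ‖ log l`.
For the forward direction take `γ t = L (e t) - L t`: then `∫_1^t γ(τ)/τ dτ` is, up to a
constant, the logarithmic average `∫_t^{e t} L(σ)/σ dσ` of `L` over `[t, e t]`, which stays
within a bounded distance of `L t`; so `β = L - ∫_1^t γ(τ)/τ dτ` is bounded. -/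

open MeasureTheory Set Real

lemma measurable_indicator_of_measurable_domRestrict {α β : Type*} [MeasurableSpace α]
    [MeasurableSpace β] [Zero β] {s : Set α} {f : α → β} (hs : MeasurableSet s)
    (hf : Measurable (s.domRestrict f)) : Measurable (s.indicator f) :=
  measurable_of_restrict_of_restrict_compl hs
    (by convert hf using 1; ext ⟨x, hx⟩; exact indicator_of_mem hx f)
    (by
      convert measurable_const (a := (0 : β)) using 1
      ext ⟨x, hx⟩
      exact indicator_of_notMem hx f)

lemma abs_le_log_iff {x c : ℝ} (hc : 0 < c) : |x| ≤ log c ↔ c⁻¹ ≤ exp x ∧ exp x ≤ c := by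
  rw [abs_le, ← log_inv, log_le_iff_le_exp (inv_pos.2 hc), le_log_iff_exp_le hc]

lemma intervalIntegrable_of_abs_le {f : ℝ → ℝ} {a b M : ℝ} (hf : Measurable f)
    (hM : ∀ x ∈ uIcc a b, |f x| ≤ M) : IntervalIntegrable f volume a b :=
  intervalIntegrable_const.mono_fun' hf.aestronglyMeasurable
    (ae_restrict_of_forall_mem measurableSet_uIoc fun x hx => hM x (uIoc_subset_uIcc hx))

lemma intervalIntegrable_div_of_abs_le {f : ℝ → ℝ} {a b M : ℝ} (hf : Measurable f)
    (ha : 0 < a) (hb : 0 < b) (hM : ∀ x ∈ uIcc a b, |f x| ≤ M) :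
    IntervalIntegrable (fun τ => f τ / τ) volume a b := by
  simp_rw [div_eq_mul_inv]
  refine (intervalIntegrable_of_abs_le hf hM).mul_continuousOn (continuousOn_inv₀.mono ?_)
  intro x hx
  rcases mem_uIcc.1 hx with ⟨h, -⟩ | ⟨h, -⟩ <;> exact (by linarith : 0 < x).ne'

lemma abs_indicator_Ici_one_div_le {f : ℝ → ℝ} {M : ℝ} (hM : ∀ t, 1 ≤ t → |f t| ≤ M)
    (τ : ℝ) : |(Ici 1).indicator f τ / τ| ≤ M := by
  by_cases hτ : 1 ≤ τ
  · rw [indicator_of_mem (mem_Ici.2 hτ), abs_div, abs_of_pos (by linarith : (0 : ℝ) < τ)]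
    exact (div_le_self (abs_nonneg _) hτ).trans (hM τ hτ)
  · rw [indicator_of_notMem (notMem_Ici.2 (not_le.1 hτ)), zero_div, abs_zero]
    exact (abs_nonneg _).trans (hM 1 le_rfl)

lemma abs_integral_div_le_mul_log {g : ℝ → ℝ} {a b M : ℝ} (ha : 0 < a) (hab : a ≤ b)
    (hg : ∀ τ ∈ Icc a b, |g τ| ≤ M) : |∫ τ in a..b, g τ / τ| ≤ M * log (b / a) := by
  have hb : 0 < b := ha.trans_le hab
  have hinv : IntervalIntegrable (fun τ : ℝ => M * τ⁻¹) volume a b := by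
    simpa [div_eq_mul_inv] using
      intervalIntegrable_div_of_abs_le (f := fun _ => M) measurable_const ha hb
        (M := |M|) fun _ _ => le_rfl
  calc |∫ τ in a..b, g τ / τ| ≤ ∫ τ in a..b, M * τ⁻¹ := by
        rw [← Real.norm_eq_abs]
        refine intervalIntegral.norm_integral_le_of_norm_le hab (ae_of_all _ fun τ hτ => ?_) hinv
        have hτ₀ : 0 < τ := ha.trans hτ.1
        rw [Real.norm_eq_abs, abs_div, abs_of_pos hτ₀, ← div_eq_mul_inv]
        exact div_le_div_of_nonneg_right (hg τ (Ioc_subset_Icc_self hτ)) hτ₀.le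
    _ = M * log (b / a) := by rw [intervalIntegral.integral_const_mul, integral_inv_of_pos ha hb]

lemma integral_comp_mul_div (f : ℝ → ℝ) {c : ℝ} (hc : c ≠ 0) (a b : ℝ) :
    ∫ τ in a..b, f (c * τ) / τ = ∫ σ in c * a..c * b, f σ / σ := by
  have h : ∀ τ, f (c * τ) / τ = c * (f (c * τ) / (c * τ)) := fun τ => by
    rw [← mul_div_assoc, mul_div_mul_left _ _ hc]
  simp_rw [h, intervalIntegral.integral_const_mul, ← smul_eq_mul]
  exact intervalIntegral.smul_integral_comp_mul_left (f := fun σ => f σ / σ) c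

lemma integral_sub_comp_mul_div {L : ℝ → ℝ} {c t : ℝ} (hc : 1 ≤ c) (ht : 1 ≤ t)
    (hint : ∀ a a', 1 ≤ a → 1 ≤ a' → IntervalIntegrable (fun σ => L σ / σ) volume a a') :
    ∫ τ in (1 : ℝ)..t, (L (c * τ) - L τ) / τ
      = (∫ σ in t..c * t, L σ / σ) - ∫ σ in (1 : ℝ)..c, L σ / σ := by
  have hct : 1 ≤ c * t := one_le_mul_of_one_le_of_one_le hc ht
  have hcomp : IntervalIntegrable (fun τ => L (c * τ) / τ) volume 1 t := by
    have h := (hint c (c * t) hc hct).comp_mul_left (c := c)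
    have hc₀ : c ≠ 0 := by positivity
    simp only [div_self hc₀, mul_div_cancel_left₀ t hc₀] at h
    simpa only [← mul_div_assoc, mul_div_mul_left _ _ hc₀] using h.const_mul c
  simp_rw [sub_div]
  rw [intervalIntegral.integral_sub hcomp (hint 1 t le_rfl ht),
    integral_comp_mul_div L (by positivity) 1 t, mul_one]
  have h₁ := intervalIntegral.integral_add_adjacent_intervals (hint 1 c le_rfl hc)
    (hint c (c * t) hc hct)
  have h₂ := intervalIntegral.integral_add_adjacent_intervals (hint 1 t le_rfl ht)
    (hint t (c * t) ht hct)
  linarith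

lemma abs_integral_div_sub_le {L : ℝ → ℝ} {t D : ℝ} (ht : 0 < t)
    (hint : IntervalIntegrable (fun σ => L σ / σ) volume t (exp 1 * t))
    (hL : ∀ σ ∈ Icc t (exp 1 * t), |L σ - L t| ≤ D) :
    |(∫ σ in t..exp 1 * t, L σ / σ) - L t| ≤ D := by
  have hte : t ≤ exp 1 * t := le_mul_of_one_le_left ht.le (one_le_exp zero_le_one)
  have hlog : log (exp 1 * t / t) = 1 := by rw [mul_div_cancel_right₀ _ ht.ne', log_exp]
  have hconst : ∫ σ in t..exp 1 * t, L t / σ = L t := by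
    simp_rw [div_eq_mul_inv]
    rw [intervalIntegral.integral_const_mul, integral_inv_of_pos ht (by positivity), hlog, mul_one]
  have hconst_int : IntervalIntegrable (fun σ => L t / σ) volume t (exp 1 * t) :=
    intervalIntegrable_div_of_abs_le measurable_const ht (by positivity) (M := |L t|)
      fun _ _ => le_rfl
  have h := abs_integral_div_le_mul_log ht hte hL
  simp_rw [sub_div] at h
  rwa [hlog, mul_one, intervalIntegral.integral_sub hint hconst_int, hconst] at h

/-- For `L = log ∘ α` and `D = log c` this is the defining inequality of the class OR. -/
def MulOscBounded (L : ℝ → ℝ) (b D : ℝ) : Prop :=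
  ∀ t, 1 ≤ t → ∀ l, 1 ≤ l → l ≤ b → |L (l * t) - L t| ≤ D

namespace MulOscBounded

variable {L : ℝ → ℝ} {b D : ℝ}

lemma nonneg (hL : MulOscBounded L b D) (hb : 1 ≤ b) : 0 ≤ D := by
  simpa using hL 1 le_rfl 1 le_rfl hb

lemma pow (hL : MulOscBounded L b D) (hb : 1 ≤ b) (n : ℕ) : MulOscBounded L (b ^ n) (n * D) := by
  induction n with
  | zero =>
    intro t _ l hl₁ hl₂
    obtain rfl : l = 1 := le_antisymm (by simpa using hl₂) hl₁
    simp
  | succ n ih =>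
    intro t ht l hl₁ hl₂
    have hD := hL.nonneg hb
    by_cases hl : l ≤ b ^ n
    · exact (ih t ht l hl₁ hl).trans (by push_cast; linarith)
    have hbn : 0 < b ^ n := pow_pos (by linarith) n
    have hbnt : 1 ≤ b ^ n * t := one_le_mul_of_one_le_of_one_le (one_le_pow₀ hb) ht
    have hq₁ : 1 ≤ l / b ^ n := (one_le_div hbn).2 (not_le.1 hl).le
    have hq₂ : l / b ^ n ≤ b := by rw [div_le_iff₀ hbn, mul_comm, ← pow_succ]; exact hl₂
    have hsplit : L (l * t) - L t = (L (l / b ^ n * (b ^ n * t)) - L (b ^ n * t))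
        + (L (b ^ n * t) - L t) := by
      rw [← mul_assoc, div_mul_cancel₀ _ hbn.ne']; ring
    rw [hsplit]
    calc _ ≤ |L (l / b ^ n * (b ^ n * t)) - L (b ^ n * t)| + |L (b ^ n * t) - L t| :=
          abs_add_le _ _
      _ ≤ D + n * D := add_le_add (hL _ hbnt _ hq₁ hq₂) (ih t ht _ (one_le_pow₀ hb) le_rfl)
      _ = (n + 1 : ℕ) * D := by push_cast; ring

lemma exists_of_one_lt (hL : MulOscBounded L b D) (hb : 1 < b) (B : ℝ) :
    ∃ D', MulOscBounded L B D' := by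
  obtain ⟨n, hn⟩ := pow_unbounded_of_one_lt B hb
  exact ⟨n * D, fun t ht l hl₁ hl₂ => hL.pow hb.le n t ht l hl₁ (hl₂.trans hn.le)⟩

lemma intervalIntegrable_div (hL : MulOscBounded L b D) (hb : 1 < b) (hLm : Measurable L)
    {a a' : ℝ} (ha : 1 ≤ a) (ha' : 1 ≤ a') :
    IntervalIntegrable (fun σ => L σ / σ) volume a a' := by
  obtain ⟨D', hD'⟩ := hL.exists_of_one_lt hb (max a a')
  refine intervalIntegrable_div_of_abs_le hLm (by linarith) (by linarith)
    (M := |L 1| + D') fun σ hσ => ?_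
  have hσ₁ : 1 ≤ σ := (le_min ha ha').trans hσ.1
  have := hD' 1 le_rfl σ hσ₁ hσ.2
  rw [mul_one] at this
  calc |L σ| = |L 1 + (L σ - L 1)| := by rw [add_sub_cancel]
    _ ≤ |L 1| + D' := (abs_add_le _ _).trans (by linarith)

theorem exists_eq_add_integral (hL : MulOscBounded L b D) (hb : 1 < b) (hLm : Measurable L) :
    ∃ β γ : ℝ → ℝ, Measurable β ∧ Measurable γ ∧ (∃ M, ∀ t, 1 ≤ t → |β t| ≤ M) ∧
      (∃ M, ∀ t, 1 ≤ t → |γ t| ≤ M) ∧ ∀ t, 1 ≤ t → L t = β t + ∫ τ in (1 : ℝ)..t, γ τ / τ := by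
  obtain ⟨D', hD'⟩ := hL.exists_of_one_lt hb (exp 1)
  have hint : ∀ a a', 1 ≤ a → 1 ≤ a' → IntervalIntegrable (fun σ => L σ / σ) volume a a' :=
    fun _ _ => hL.intervalIntegrable_div hb hLm
  have he : 1 ≤ exp 1 := one_le_exp zero_le_one
  have hincr : ∀ t, 1 ≤ t → |L (exp 1 * t) - L t| ≤ D' := fun t ht => hD' t ht _ he le_rfl
  set γ := (Ici 1).indicator fun t => L (exp 1 * t) - L t
  have hγm : Measurable γ :=
    ((hLm.comp (measurable_const_mul _)).sub hLm).indicator measurableSet_Ici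
  have hγ : ∀ t, 1 ≤ t → |γ t| ≤ D' := fun t ht => by
    simpa only [γ, indicator_of_mem (mem_Ici.2 ht)] using hincr t ht
  set C := ∫ σ in (1 : ℝ)..exp 1, L σ / σ
  have hprim : ∀ t, 1 ≤ t → ∫ τ in (1 : ℝ)..t, γ τ / τ = (∫ σ in t..exp 1 * t, L σ / σ) - C :=
    fun t ht => by
      rw [← integral_sub_comp_mul_div he ht hint]
      refine intervalIntegral.integral_congr fun τ hτ => ?_
      rw [uIcc_of_le ht] at hτ
      simp only [γ, indicator_of_mem (mem_Ici.2 hτ.1)]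
  have hcont : Continuous fun t => ∫ τ in (1 : ℝ)..t, γ τ / τ :=
    intervalIntegral.continuous_primitive (fun _ _ => intervalIntegrable_of_abs_le
      (f := fun τ => γ τ / τ) (hγm.div measurable_id)
      fun τ _ => abs_indicator_Ici_one_div_le hincr τ) 1
  refine ⟨fun t => L t - ∫ τ in (1 : ℝ)..t, γ τ / τ, γ, hLm.sub hcont.measurable, hγm,
    ⟨D' + |C|, fun t ht => ?_⟩, ⟨D', hγ⟩, fun t _ => by ring⟩
  have ht₀ : 0 < t := by linarith
  have havg := abs_integral_div_sub_le ht₀ (hint t _ ht (one_le_mul_of_one_le_of_one_le he ht))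
    fun σ hσ => by
      have hl₁ : 1 ≤ σ / t := (one_le_div ht₀).2 hσ.1
      have hl₂ : σ / t ≤ exp 1 := (div_le_iff₀ ht₀).2 hσ.2
      simpa [div_mul_cancel₀ σ ht₀.ne'] using hD' t ht _ hl₁ hl₂
  simp only [hprim t ht]
  rw [abs_le] at havg ⊢
  constructor <;> linarith [neg_abs_le C, le_abs_self C]

end MulOscBounded

lemma mulOscBounded_of_eq_add_integral {L β γ : ℝ → ℝ} {Mβ Mγ : ℝ}
    (hγm : Measurable ((Ici 1).domRestrict γ)) (hβ : ∀ t, 1 ≤ t → |β t| ≤ Mβ)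
    (hγ : ∀ t, 1 ≤ t → |γ t| ≤ Mγ)
    (hL : ∀ t, 1 ≤ t → L t = β t + ∫ τ in (1 : ℝ)..t, γ τ / τ) :
    MulOscBounded L (exp 1) (2 * Mβ + Mγ) := by
  intro t ht l hl₁ hl₂
  have ht₀ : 0 < t := by linarith
  have hlt : t ≤ l * t := le_mul_of_one_le_left ht₀.le hl₁
  set γ₀ := (Ici 1).indicator γ
  have hint : ∀ a a', IntervalIntegrable (fun τ => γ₀ τ / τ) volume a a' := fun _ _ =>
    intervalIntegrable_of_abs_le (f := fun τ => γ₀ τ / τ)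
      ((measurable_indicator_of_measurable_domRestrict measurableSet_Ici hγm).div measurable_id)
      fun τ _ => abs_indicator_Ici_one_div_le hγ τ
  have hγ₀ : ∀ s, 1 ≤ s → ∫ τ in (1 : ℝ)..s, γ τ / τ = ∫ τ in (1 : ℝ)..s, γ₀ τ / τ :=
    fun s hs => intervalIntegral.integral_congr fun τ hτ => by
      rw [uIcc_of_le hs] at hτ
      simp only [γ₀, indicator_of_mem (mem_Ici.2 hτ.1)]
  have hsplit : L (l * t) - L t = (β (l * t) - β t) + ∫ τ in t..l * t, γ₀ τ / τ := by
    rw [hL _ (ht.trans hlt), hL t ht, hγ₀ _ (ht.trans hlt), hγ₀ t ht,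
      ← intervalIntegral.integral_add_adjacent_intervals (hint 1 t) (hint t (l * t))]
    ring
  have hβ' : |β (l * t) - β t| ≤ 2 * Mβ := by
    linarith [abs_sub (β (l * t)) (β t), hβ _ (ht.trans hlt), hβ t ht]
  have hγ' : |∫ τ in t..l * t, γ₀ τ / τ| ≤ Mγ := by
    have h := abs_integral_div_le_mul_log (g := γ₀) (M := Mγ) ht₀ hlt fun τ hτ => by
      simpa only [γ₀, indicator_of_mem (mem_Ici.2 (ht.trans hτ.1))] using hγ τ (ht.trans hτ.1)
    rw [mul_div_cancel_right₀ _ ht₀.ne'] at h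
    exact h.trans (mul_le_of_le_one_right ((abs_nonneg _).trans (hγ 1 le_rfl))
      ((log_le_iff_le_exp (by linarith)).2 hl₂))
  rw [hsplit]
  exact (abs_add_le _ _).trans (add_le_add hβ' hγ')

/-- A Borel measurable `α : [1,∞) → (0,∞)` belongs to the class OR if and
only if `α(t) = exp(β(t) + ∫₁ᵗ γ(τ)/τ dτ)` for some Borel measurable bounded real-valued
functions `β`, `γ` on `[1,∞)`. -/
theorem stmt_1 (α : ℝ → ℝ)
    (hmeas : Measurable ((Set.Ici (1:ℝ)).restrict α))
    (hpos : ∀ t, 1 ≤ t → 0 < α t) :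
    (∃ b : ℝ, 1 < b ∧ ∃ c : ℝ, 1 ≤ c ∧ ∀ t, 1 ≤ t → ∀ l, 1 ≤ l → l ≤ b →
        c⁻¹ ≤ α (l * t) / α t ∧ α (l * t) / α t ≤ c) ↔
    (∃ β γ : ℝ → ℝ,
        Measurable ((Set.Ici (1:ℝ)).restrict β) ∧
        Measurable ((Set.Ici (1:ℝ)).restrict γ) ∧
        (∃ M : ℝ, ∀ t, 1 ≤ t → |β t| ≤ M) ∧
        (∃ M : ℝ, ∀ t, 1 ≤ t → |γ t| ≤ M) ∧
        ∀ t, 1 ≤ t → α t = Real.exp (β t + ∫ τ in (1:ℝ)..t, γ τ / τ)) := by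
  have hratio : ∀ t, 1 ≤ t → ∀ l, 1 ≤ l →
      α (l * t) / α t = exp (log (α (l * t)) - log (α t)) := fun t ht l hl => by
    rw [exp_sub, exp_log (hpos t ht), exp_log (hpos _ (one_le_mul_of_one_le_of_one_le hl ht))]
  constructor
  · rintro ⟨b, hb, c, hc, H⟩
    set L := (Ici 1).indicator fun t => log (α t)
    have hL : MulOscBounded L b (log c) := fun t ht l hl₁ hl₂ => by
      simp only [L, indicator_of_mem (mem_Ici.2 ht),
        indicator_of_mem (mem_Ici.2 (one_le_mul_of_one_le_of_one_le hl₁ ht))]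
      rw [abs_le_log_iff (by linarith), ← hratio t ht l hl₁]
      exact H t ht l hl₁ hl₂
    obtain ⟨β, γ, hβm, hγm, hβ, hγ, hrep⟩ := hL.exists_eq_add_integral hb
      (measurable_indicator_of_measurable_domRestrict measurableSet_Ici
        (measurable_log.comp hmeas))
    refine ⟨β, γ, hβm.comp measurable_subtype_coe, hγm.comp measurable_subtype_coe, hβ, hγ,
      fun t ht => ?_⟩
    rw [← hrep t ht]
    simp only [L, indicator_of_mem (mem_Ici.2 ht), exp_log (hpos t ht)]
  · rintro ⟨β, γ, -, hγm, ⟨Mβ, hβ⟩, ⟨Mγ, hγ⟩, hα⟩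
    have he : 1 < exp 1 := one_lt_exp_iff.2 one_pos
    have hL := mulOscBounded_of_eq_add_integral (L := fun t => log (α t)) hγm hβ hγ
      fun t ht => by rw [hα t ht, log_exp]
    refine ⟨exp 1, he, exp (2 * Mβ + Mγ), one_le_exp (hL.nonneg he.le),
      fun t ht l hl₁ hl₂ => ?_⟩
    rw [hratio t ht l hl₁, ← abs_le_log_iff (exp_pos _), log_exp]
    exact hL t ht l hl₁ hl₂
end

section
/- Let θ ∈ ℝ, δ > 0, and 0 < λ < 1. Define α : [1,∞) → (0,∞) by α(t) = t^{θ + δ·sin((log log t)^λ)} if t > e, and α(t) = t^θ if 1 ≤ t ≤ e. Then α belongs to OR, with lower Matuszewska index σ₀(α) = θ − δ and upper Matuszewska index σ₁(α) = θ + δ. -/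
/-- The class OR of O-regularly varying functions: Borel measurable
`α : [1,∞) → (0,∞)` such that `c⁻¹ ≤ α (l * t) / α t ≤ c` for all `t ≥ 1`
and `l ∈ [1, b]`, for some `b > 1` and `c ≥ 1`. -/
def IsOR (α : ℝ → ℝ) : Prop :=
  Measurable ((Set.Ici (1:ℝ)).restrict α) ∧ (∀ t, 1 ≤ t → 0 < α t) ∧
  ∃ b : ℝ, 1 < b ∧ ∃ c : ℝ, 1 ≤ c ∧ ∀ t, 1 ≤ t → ∀ l, 1 ≤ l → l ≤ b →
    c⁻¹ ≤ α (l * t) / α t ∧ α (l * t) / α t ≤ c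

/-- The set of lower Matuszewska exponents. -/
def lowerMSet (α : ℝ → ℝ) : Set ℝ :=
  {r₀ | ∃ c₀ : ℝ, 0 < c₀ ∧ ∀ t, 1 ≤ t → ∀ l, 1 ≤ l → c₀ * l ^ r₀ ≤ α (l * t) / α t}

/-- The set of upper Matuszewska exponents. -/
def upperMSet (α : ℝ → ℝ) : Set ℝ :=
  {r₁ | ∃ c₁ : ℝ, 0 < c₁ ∧ ∀ t, 1 ≤ t → ∀ l, 1 ≤ l → α (l * t) / α t ≤ c₁ * l ^ r₁}

/-- The lower Matuszewska index `σ₀(α)`. -/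
noncomputable def sigma0 (α : ℝ → ℝ) : ℝ := sSup (lowerMSet α)

/-- The upper Matuszewska index `σ₁(α)`. -/
noncomputable def sigma1 (α : ℝ → ℝ) : ℝ := sInf (upperMSet α)

/-- The oscillating function `α(t) = t^{θ + δ sin((log log t)^λ)}` for `t > e`
and `α(t) = t^θ` for `1 ≤ t ≤ e`. -/
noncomputable def alphaOsc (θ δ lam : ℝ) : ℝ → ℝ := fun t =>
  if Real.exp 1 < t then t ^ (θ + δ * Real.sin (Real.log (Real.log t) ^ lam))
  else t ^ θ

/-!
In the variable `s = log t` one has `log α(t) = s g(s)`, with `g = alphaOscIndex` oscillating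
between `θ - δ` and `θ + δ`, so that with `m = log l`
`log (α(lt) / α(t)) = m g(s + m) + s (g(s + m) - g(s))`.
The oscillation of `g` slows down: `(log s)^λ` has derivative `λ (log s)^(λ-1) / s = o(1 / s)`,
so the second term is at most `ε m + C_ε` for every `ε > 0`, and `θ ± (δ + ε)` are Matuszewska
exponents. Conversely, at `t = 1` and `l = exp (exp (w^(1/λ)))` with `sin w = ±1` the ratio is
exactly `l^(θ ± δ)`, so no better exponents exist.
-/

open Real Filter Topology Set

section Matuszewska

variable {α : ℝ → ℝ}

lemma inv_two_rpow_abs_le_rpow {l : ℝ} (hl1 : 1 ≤ l) (hl2 : l ≤ 2) (r : ℝ) :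
    (2 ^ |r|)⁻¹ ≤ l ^ r := by
  rw [← rpow_neg zero_le_two]
  calc (2 : ℝ) ^ (-|r|) ≤ l ^ (-|r|) :=
        rpow_le_rpow_of_nonpos (by linarith) hl2 (neg_nonpos.2 (abs_nonneg r))
    _ ≤ l ^ r := rpow_le_rpow_of_exponent_le hl1 (neg_abs_le r)

lemma rpow_le_two_rpow_abs {l : ℝ} (hl1 : 1 ≤ l) (hl2 : l ≤ 2) (r : ℝ) : l ^ r ≤ 2 ^ |r| :=
  (rpow_le_rpow_of_exponent_le hl1 (le_abs_self r)).trans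
    (rpow_le_rpow (by linarith) hl2 (abs_nonneg r))

lemma isOR_of_mem_lowerMSet_of_mem_upperMSet
    (hmeas : Measurable α) (hpos : ∀ t, 1 ≤ t → 0 < α t)
    {r₀ r₁ : ℝ} (h₀ : r₀ ∈ lowerMSet α) (h₁ : r₁ ∈ upperMSet α) : IsOR α := by
  obtain ⟨c₀, hc₀, hlow⟩ := h₀
  obtain ⟨c₁, hc₁, hup⟩ := h₁
  refine ⟨hmeas.comp measurable_subtype_coe, hpos, 2, one_lt_two,
    max 1 (max (c₁ * 2 ^ |r₁|) (c₀⁻¹ * 2 ^ |r₀|)), le_max_left _ _, fun t ht l hl1 hl2 => ⟨?_, ?_⟩⟩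
  · calc (max 1 (max (c₁ * 2 ^ |r₁|) (c₀⁻¹ * 2 ^ |r₀|)))⁻¹ ≤ (c₀⁻¹ * 2 ^ |r₀|)⁻¹ :=
          inv_anti₀ (by positivity) (le_max_of_le_right (le_max_right _ _))
      _ = c₀ * (2 ^ |r₀|)⁻¹ := by rw [mul_inv, inv_inv]
      _ ≤ c₀ * l ^ r₀ := by gcongr; exact inv_two_rpow_abs_le_rpow hl1 hl2 r₀
      _ ≤ α (l * t) / α t := hlow t ht l hl1
  · calc α (l * t) / α t ≤ c₁ * l ^ r₁ := hup t ht l hl1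
      _ ≤ c₁ * 2 ^ |r₁| := by gcongr; exact rpow_le_two_rpow_abs hl1 hl2 r₁
      _ ≤ _ := le_max_of_le_right (le_max_left _ _)

lemma sigma0_eq_of_forall_sub_mem {a : ℝ} (hmem : ∀ ε > 0, a - ε ∈ lowerMSet α)
    (hle : ∀ r ∈ lowerMSet α, r ≤ a) : sigma0 α = a :=
  csSup_eq_of_forall_le_of_forall_lt_exists_gt ⟨_, hmem 1 one_pos⟩ hle fun w hw =>
    ⟨a - (a - w) / 2, hmem _ (by linarith), by linarith⟩

lemma sigma1_eq_of_forall_add_mem {a : ℝ} (hmem : ∀ ε > 0, a + ε ∈ upperMSet α)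
    (hge : ∀ r ∈ upperMSet α, a ≤ r) : sigma1 α = a :=
  csInf_eq_of_forall_ge_of_forall_gt_exists_lt ⟨_, hmem 1 one_pos⟩ hge fun w hw =>
    ⟨a + (w - a) / 2, hmem _ (by linarith), by linarith⟩

lemma le_of_mem_upperMSet {b r : ℝ} (hb : ∃ᶠ l in atTop, α l / α 1 = l ^ b)
    (hr : r ∈ upperMSet α) : b ≤ r := by
  obtain ⟨c, -, hc⟩ := hr
  by_contra! hrb
  have hlarge : ∀ᶠ l in atTop, 1 ≤ l ∧ c < l ^ (b - r) :=
    (eventually_ge_atTop 1).and ((tendsto_rpow_atTop (sub_pos.2 hrb)).eventually_gt_atTop c)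
  obtain ⟨l, hαl, hl1, hcl⟩ := (hb.and_eventually hlarge).exists
  have hbound := hc 1 le_rfl l hl1
  rw [mul_one, hαl, ← div_le_iff₀ (rpow_pos_of_pos (by linarith) r),
    ← rpow_sub (by linarith)] at hbound
  linarith

lemma le_of_mem_lowerMSet {a r : ℝ} (ha : ∃ᶠ l in atTop, α l / α 1 = l ^ a)
    (hr : r ∈ lowerMSet α) : r ≤ a := by
  obtain ⟨c, hc0, hc⟩ := hr
  by_contra! har
  have hsmall : ∀ᶠ l in atTop, 1 ≤ l ∧ l ^ (-(r - a)) < c :=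
    (eventually_ge_atTop 1).and
      ((tendsto_rpow_neg_atTop (sub_pos.2 har)).eventually (gt_mem_nhds hc0))
  obtain ⟨l, hαl, hl1, hlc⟩ := (ha.and_eventually hsmall).exists
  have hbound := hc 1 le_rfl l hl1
  rw [mul_one, hαl, ← le_div_iff₀ (rpow_pos_of_pos (by linarith) r),
    ← rpow_sub (by linarith), ← neg_sub] at hbound
  linarith

lemma mem_upperMSet_of_exp_comp_log {φ : ℝ → ℝ} (hα : ∀ t, 1 ≤ t → α t = exp (φ (log t)))
    {r C : ℝ} (h : ∀ s m, 0 ≤ s → 0 ≤ m → φ (s + m) - φ s ≤ r * m + C) :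
    r ∈ upperMSet α := by
  refine ⟨exp C, exp_pos C, fun t ht l hl => ?_⟩
  rw [hα _ (one_le_mul_of_one_le_of_one_le hl ht), hα t ht, ← exp_sub,
    log_mul (by positivity) (by positivity), rpow_def_of_pos (by positivity), ← exp_add,
    add_comm (log l) (log t)]
  exact exp_le_exp.2 (by linarith [h (log t) (log l) (log_nonneg ht) (log_nonneg hl)])

lemma mem_lowerMSet_of_exp_comp_log {φ : ℝ → ℝ} (hα : ∀ t, 1 ≤ t → α t = exp (φ (log t)))
    {r C : ℝ} (h : ∀ s m, 0 ≤ s → 0 ≤ m → r * m - C ≤ φ (s + m) - φ s) :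
    r ∈ lowerMSet α := by
  refine ⟨exp (-C), exp_pos (-C), fun t ht l hl => ?_⟩
  rw [hα _ (one_le_mul_of_one_le_of_one_le hl ht), hα t ht, ← exp_sub,
    log_mul (by positivity) (by positivity), rpow_def_of_pos (by positivity), ← exp_add,
    add_comm (log l) (log t)]
  exact exp_le_exp.2 (by linarith [h (log t) (log l) (log_nonneg ht) (log_nonneg hl)])

end Matuszewska

lemma rpow_sub_rpow_le_mul_rpow_sub_one {u v p : ℝ} (hu : 0 < u) (huv : u ≤ v) (hp0 : 0 ≤ p)
    (hp1 : p ≤ 1) : v ^ p - u ^ p ≤ p * u ^ (p - 1) * (v - u) := by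
  have hv : v = u * (1 + (v - u) / u) := by field_simp; ring
  have hbernoulli : (1 + (v - u) / u) ^ p ≤ 1 + p * ((v - u) / u) :=
    rpow_one_add_le_one_add_mul_self (by linarith [div_nonneg (sub_nonneg.2 huv) hu.le]) hp0 hp1
  calc v ^ p - u ^ p = u ^ p * (1 + (v - u) / u) ^ p - u ^ p := by
        rw [hv, mul_rpow hu.le (by positivity), ← hv]
    _ ≤ u ^ p * (1 + p * ((v - u) / u)) - u ^ p := by gcongr
    _ = p * u ^ (p - 1) * (v - u) := by rw [rpow_sub_one hu.ne']; field_simp; ring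

lemma abs_sin_log_rpow_sub_le {p s m : ℝ} (hp0 : 0 ≤ p) (hp1 : p ≤ 1) (hs : 1 < s)
    (hm : 0 ≤ m) :
    |sin (log (s + m) ^ p) - sin (log s ^ p)| ≤ p * log s ^ (p - 1) * (m / s) := by
  have hlog : 0 < log s := log_pos hs
  have hmono : log s ≤ log (s + m) := log_le_log (by linarith) (by linarith)
  have hlog_sub : log (s + m) - log s ≤ m / s := by
    rw [← log_div (by linarith) (by linarith)]
    calc log ((s + m) / s) ≤ (s + m) / s - 1 := log_le_sub_one_of_pos (by positivity)
      _ = m / s := by field_simp; ring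
  calc |sin (log (s + m) ^ p) - sin (log s ^ p)|
      ≤ |log (s + m) ^ p - log s ^ p| := abs_sin_sub_sin_le _ _
    _ = log (s + m) ^ p - log s ^ p :=
        abs_of_nonneg (sub_nonneg.2 (rpow_le_rpow hlog.le hmono hp0))
    _ ≤ p * log s ^ (p - 1) * (log (s + m) - log s) :=
        rpow_sub_rpow_le_mul_rpow_sub_one hlog hmono hp0 hp1
    _ ≤ p * log s ^ (p - 1) * (m / s) := by gcongr

noncomputable def alphaOscIndex (θ δ lam s : ℝ) : ℝ :=
  if 1 < s then θ + δ * sin (log s ^ lam) else θ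

section alphaOsc

variable {θ δ lam : ℝ}

lemma alphaOsc_eq_exp {t : ℝ} (ht : 0 < t) :
    alphaOsc θ δ lam t = exp (log t * alphaOscIndex θ δ lam (log t)) := by
  simp only [alphaOsc, alphaOscIndex, lt_log_iff_exp_lt ht]
  split_ifs <;> exact rpow_def_of_pos ht _

lemma alphaOscIndex_mem_Icc (hδ : 0 ≤ δ) (s : ℝ) :
    alphaOscIndex θ δ lam s ∈ Icc (θ - δ) (θ + δ) := by
  unfold alphaOscIndex
  split_ifs
  · constructor <;> nlinarith [neg_one_le_sin (log s ^ lam), sin_le_one (log s ^ lam)]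
  · constructor <;> linarith

lemma abs_alphaOscIndex_sub_le (hδ : 0 ≤ δ) (a b : ℝ) :
    |alphaOscIndex θ δ lam a - alphaOscIndex θ δ lam b| ≤ 2 * δ := by
  have ha := alphaOscIndex_mem_Icc (θ := θ) (lam := lam) hδ a
  have hb := alphaOscIndex_mem_Icc (θ := θ) (lam := lam) hδ b
  rw [abs_sub_le_iff]
  constructor <;> linarith [ha.1, ha.2, hb.1, hb.2]

lemma exists_abs_alphaOscIndex_sub_mul_le (hδ : 0 ≤ δ) (hlam0 : 0 < lam) (hlam1 : lam < 1)
    {ε : ℝ} (hε : 0 < ε) : ∃ C, ∀ s m, 0 ≤ s → 0 ≤ m →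
      |alphaOscIndex θ δ lam (s + m) - alphaOscIndex θ δ lam s| * s ≤ ε * m + C := by
  have hdecay : Tendsto (fun s => δ * lam * log s ^ (lam - 1)) atTop (𝓝 0) := by
    have h := (tendsto_rpow_neg_atTop (sub_pos.2 hlam1)).comp tendsto_log_atTop
    simpa only [neg_sub, Function.comp_def, mul_zero] using h.const_mul (δ * lam)
  obtain ⟨S, hS⟩ := eventually_atTop.1
    ((hdecay.eventually (ge_mem_nhds hε)).and (eventually_ge_atTop 1))
  refine ⟨2 * δ * S, fun s m hs hm => ?_⟩
  have hεm : 0 ≤ ε * m := mul_nonneg hε.le hm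
  rcases le_or_gt s S with hsS | hSs
  · calc |alphaOscIndex θ δ lam (s + m) - alphaOscIndex θ δ lam s| * s ≤ 2 * δ * S :=
          mul_le_mul (abs_alphaOscIndex_sub_le hδ _ _) hsS hs (by positivity)
      _ ≤ ε * m + 2 * δ * S := by linarith
  · obtain ⟨-, hS1⟩ := hS S le_rfl
    have hs1 : 1 < s := by linarith
    have hdiff : alphaOscIndex θ δ lam (s + m) - alphaOscIndex θ δ lam s =
        δ * (sin (log (s + m) ^ lam) - sin (log s ^ lam)) := by
      rw [alphaOscIndex, alphaOscIndex, if_pos (by linarith), if_pos hs1]; ring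
    calc |alphaOscIndex θ δ lam (s + m) - alphaOscIndex θ δ lam s| * s
        = δ * |sin (log (s + m) ^ lam) - sin (log s ^ lam)| * s := by
          rw [hdiff, abs_mul, abs_of_nonneg hδ]
      _ ≤ δ * (lam * log s ^ (lam - 1) * (m / s)) * s := by
          gcongr; exact abs_sin_log_rpow_sub_le hlam0.le hlam1.le hs1 hm
      _ = δ * lam * log s ^ (lam - 1) * m := by field_simp
      _ ≤ ε * m := by gcongr; exact (hS s hSs.le).1
      _ ≤ ε * m + 2 * δ * S := le_add_of_nonneg_right (by positivity)

lemma add_mem_upperMSet_alphaOsc (hδ : 0 ≤ δ) (hlam0 : 0 < lam) (hlam1 : lam < 1) {ε : ℝ}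
    (hε : 0 < ε) : θ + δ + ε ∈ upperMSet (alphaOsc θ δ lam) := by
  obtain ⟨C, hC⟩ := exists_abs_alphaOscIndex_sub_mul_le (θ := θ) hδ hlam0 hlam1 hε
  refine mem_upperMSet_of_exp_comp_log (φ := fun s => s * alphaOscIndex θ δ lam s) (C := C)
    (fun t ht => alphaOsc_eq_exp (by linarith)) fun s m hs hm => ?_
  have hindex :=
    mul_le_mul_of_nonneg_left (alphaOscIndex_mem_Icc (θ := θ) (lam := lam) hδ (s + m)).2 hm
  have hosc := mul_le_mul_of_nonneg_right
    (le_abs_self (alphaOscIndex θ δ lam (s + m) - alphaOscIndex θ δ lam s)) hs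
  linarith [hC s m hs hm]

lemma sub_mem_lowerMSet_alphaOsc (hδ : 0 ≤ δ) (hlam0 : 0 < lam) (hlam1 : lam < 1) {ε : ℝ}
    (hε : 0 < ε) : θ - δ - ε ∈ lowerMSet (alphaOsc θ δ lam) := by
  obtain ⟨C, hC⟩ := exists_abs_alphaOscIndex_sub_mul_le (θ := θ) hδ hlam0 hlam1 hε
  refine mem_lowerMSet_of_exp_comp_log (φ := fun s => s * alphaOscIndex θ δ lam s) (C := C)
    (fun t ht => alphaOsc_eq_exp (by linarith)) fun s m hs hm => ?_
  have hindex :=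
    mul_le_mul_of_nonneg_left (alphaOscIndex_mem_Icc (θ := θ) (lam := lam) hδ (s + m)).1 hm
  have hosc := mul_le_mul_of_nonneg_right
    (neg_abs_le (alphaOscIndex θ δ lam (s + m) - alphaOscIndex θ δ lam s)) hs
  linarith [hC s m hs hm]

lemma frequently_alphaOsc_eq_rpow (hlam0 : 0 < lam) (x : ℝ) :
    ∃ᶠ l in atTop, alphaOsc θ δ lam l = l ^ (θ + δ * sin x) := by
  have hw : Tendsto (fun k : ℕ => x + k * (2 * π)) atTop atTop :=
    tendsto_atTop_add_const_left _ _
      (tendsto_natCast_atTop_atTop.atTop_mul_const (by positivity))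
  have hl : Tendsto (fun k : ℕ => exp (exp ((x + k * (2 * π)) ^ lam⁻¹))) atTop atTop :=
    tendsto_exp_atTop.comp <|
      tendsto_exp_atTop.comp ((tendsto_rpow_atTop (inv_pos.2 hlam0)).comp hw)
  refine hl.frequently (Eventually.frequently ?_)
  filter_upwards [hw.eventually_gt_atTop 0] with k hk
  have hpeak : exp 1 < exp (exp ((x + k * (2 * π)) ^ lam⁻¹)) :=
    exp_lt_exp.2 (one_lt_exp_iff.2 (rpow_pos_of_pos hk _))
  simp only [alphaOsc, if_pos hpeak, log_exp, rpow_inv_rpow hk.le hlam0.ne',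
    sin_add_nat_mul_two_pi]

lemma alphaOsc_one : alphaOsc θ δ lam 1 = 1 := by
  rw [alphaOsc, if_neg (not_lt.2 (one_le_exp zero_le_one)), one_rpow]

lemma measurable_alphaOsc : Measurable (alphaOsc θ δ lam) :=
  Measurable.ite (measurableSet_lt measurable_const measurable_id) (by fun_prop) (by fun_prop)

end alphaOsc

/-- For `θ ∈ ℝ`, `δ > 0`, `0 < λ < 1`, the function `alphaOsc θ δ λ`
belongs to OR with `σ₀ = θ − δ` and `σ₁ = θ + δ`. -/
theorem stmt_6 (θ δ lam : ℝ) (hδ : 0 < δ) (hlam0 : 0 < lam) (hlam1 : lam < 1) :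
    IsOR (alphaOsc θ δ lam) ∧
    sigma0 (alphaOsc θ δ lam) = θ - δ ∧
    sigma1 (alphaOsc θ δ lam) = θ + δ := by
  have hlow : ∀ ε > 0, θ - δ - ε ∈ lowerMSet (alphaOsc θ δ lam) := fun _ hε =>
    sub_mem_lowerMSet_alphaOsc hδ.le hlam0 hlam1 hε
  have hup : ∀ ε > 0, θ + δ + ε ∈ upperMSet (alphaOsc θ δ lam) := fun _ hε =>
    add_mem_upperMSet_alphaOsc hδ.le hlam0 hlam1 hε
  have hpeak : ∀ x, ∃ᶠ l in atTop,
      alphaOsc θ δ lam l / alphaOsc θ δ lam 1 = l ^ (θ + δ * sin x) := fun x =>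
    (frequently_alphaOsc_eq_rpow hlam0 x).mono fun l hl => by rw [alphaOsc_one, div_one, hl]
  have hmax := hpeak (π / 2)
  have hmin := hpeak (-(π / 2))
  rw [sin_pi_div_two, mul_one] at hmax
  rw [sin_neg, sin_pi_div_two, mul_neg_one, ← sub_eq_add_neg] at hmin
  refine ⟨isOR_of_mem_lowerMSet_of_mem_upperMSet measurable_alphaOsc
      (fun t ht => by rw [alphaOsc_eq_exp (by linarith)]; exact exp_pos _)
      (hlow 1 one_pos) (hup 1 one_pos),
    sigma0_eq_of_forall_sub_mem hlow fun r hr => le_of_mem_lowerMSet hmin hr,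
    sigma1_eq_of_forall_add_mem hup fun r hr => le_of_mem_upperMSet hmax hr⟩
end

section
/- Let θ ∈ ℝ and δ > 0. Define α : [1,∞) → (0,∞) by α(t) = t^{θ + δ·sin(log log t)} if t > e, and α(t) = t^θ if 1 ≤ t ≤ e. Then α belongs to OR, with lower Matuszewska index σ₀(α) = θ − √2·δ and upper Matuszewska index σ₁(α) = θ + √2·δ. -/
/-- The oscillating function `α(t) = t^{θ + δ sin(log log t)}` for `t > e`
and `α(t) = t^θ` for `1 ≤ t ≤ e`. -/
noncomputable def alphaOsc1 (θ δ : ℝ) : ℝ → ℝ := fun t =>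
  if Real.exp 1 < t then t ^ (θ + δ * Real.sin (Real.log (Real.log t)))
  else t ^ θ

/-!
In the variable `u = log t` one has `log α(eᵘ) = θ u + δ Q(max u 1)` with `Q(u) = u sin(log u)`,
and `Q'(u) = sin(log u) + cos(log u) = √2 cos(log u - π/4)` takes values in `[-√2, √2]`.
The mean value theorem therefore pins `log (α(l t) / α(t))` between `(θ ∓ √2 δ) log l`.
Both bounds are sharp: on the intervals `u ∈ [exp(p - ε + 2πn), exp(p + ε + 2πn)]`, with
`p = π/4` or `p = 5π/4`, the slope of `Q` stays within `√2 (1 - cos ε)` of `±√2`, and the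
length of these intervals tends to infinity, which absorbs the multiplicative constants in the
definition of the Matuszewska indices.
-/

open Real Set Filter Topology

lemma le_of_forall_exists_mul_le_mul_add {a b C : ℝ} (h : ∀ S, ∃ s ≥ S, a * s ≤ b * s + C) :
    a ≤ b := by
  by_contra! hba
  obtain ⟨s, hs, hle⟩ := h (max 1 ((|C| + 1) / (a - b)))
  have hab : 0 < a - b := sub_pos.2 hba
  have hCs : |C| + 1 ≤ (a - b) * s := by
    rw [← div_le_iff₀' hab]
    exact (le_max_right _ _).trans hs
  nlinarith [le_abs_self C]

lemma sin_add_cos_eq_sqrt_two_mul_cos (x : ℝ) : sin x + cos x = √2 * cos (x - π / 4) := by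
  have h2 : √2 ^ 2 = 2 := sq_sqrt zero_le_two
  rw [cos_sub, cos_pi_div_four, sin_pi_div_four]
  linear_combination (-(sin x + cos x) / 2) * h2

noncomputable def mulSinLog (u : ℝ) : ℝ := u * sin (log u)

lemma hasDerivAt_mulSinLog {u : ℝ} (hu : 0 < u) :
    HasDerivAt mulSinLog (√2 * cos (log u - π / 4)) u := by
  have h : HasDerivAt mulSinLog (1 * sin (log u) + u * (cos (log u) * u⁻¹)) u :=
    (hasDerivAt_id' u).mul ((hasDerivAt_sin (log u)).comp u (hasDerivAt_log hu.ne'))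
  convert h using 1
  rw [← sin_add_cos_eq_sqrt_two_mul_cos]
  field_simp

lemma mulSinLog_sub_le_mul_sub {a b M : ℝ} (ha : 0 < a) (hab : a ≤ b)
    (hM : ∀ u ∈ Icc a b, √2 * cos (log u - π / 4) ≤ M) :
    mulSinLog b - mulSinLog a ≤ M * (b - a) := by
  have hderiv : ∀ u ∈ Icc a b, HasDerivAt mulSinLog (√2 * cos (log u - π / 4)) u :=
    fun u hu => hasDerivAt_mulSinLog (ha.trans_le hu.1)
  refine (convex_Icc a b).image_sub_le_mul_sub_of_deriv_le
    (fun u hu => (hderiv u hu).continuousAt.continuousWithinAt)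
    (fun u hu => (hderiv u (interior_subset hu)).differentiableAt.differentiableWithinAt)
    (fun u hu => ?_) a (left_mem_Icc.2 hab) b (right_mem_Icc.2 hab) hab
  rw [(hderiv u (interior_subset hu)).deriv]
  exact hM u (interior_subset hu)

lemma mul_sub_le_mulSinLog_sub {a b m : ℝ} (ha : 0 < a) (hab : a ≤ b)
    (hm : ∀ u ∈ Icc a b, m ≤ √2 * cos (log u - π / 4)) :
    m * (b - a) ≤ mulSinLog b - mulSinLog a := by
  have hderiv : ∀ u ∈ Icc a b, HasDerivAt mulSinLog (√2 * cos (log u - π / 4)) u :=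
    fun u hu => hasDerivAt_mulSinLog (ha.trans_le hu.1)
  refine (convex_Icc a b).mul_sub_le_image_sub_of_le_deriv
    (fun u hu => (hderiv u hu).continuousAt.continuousWithinAt)
    (fun u hu => (hderiv u (interior_subset hu)).differentiableAt.differentiableWithinAt)
    (fun u hu => ?_) a (left_mem_Icc.2 hab) b (right_mem_Icc.2 hab) hab
  rw [(hderiv u (interior_subset hu)).deriv]
  exact hm u (interior_subset hu)

lemma abs_mulSinLog_sub_le {a b : ℝ} (ha : 0 < a) (hab : a ≤ b) :
    |mulSinLog b - mulSinLog a| ≤ √2 * (b - a) := by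
  have hcos : ∀ x, |√2 * cos x| ≤ √2 := fun x => by
    rw [abs_mul, abs_of_nonneg (sqrt_nonneg 2)]
    exact mul_le_of_le_one_right (sqrt_nonneg 2) (abs_cos_le_one x)
  refine abs_le.2 ⟨?_, mulSinLog_sub_le_mul_sub ha hab fun u _ => (abs_le.1 (hcos _)).2⟩
  rw [← neg_mul]
  exact mul_sub_le_mulSinLog_sub ha hab fun u _ => (abs_le.1 (hcos _)).1

lemma abs_mulSinLog_max_sub_le {x y : ℝ} (hxy : x ≤ y) :
    |mulSinLog (max y 1) - mulSinLog (max x 1)| ≤ √2 * (y - x) := by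
  refine (abs_mulSinLog_sub_le (one_pos.trans_le (le_max_right x 1))
    (max_le_max_right 1 hxy)).trans (mul_le_mul_of_nonneg_left ?_ (sqrt_nonneg 2))
  have := abs_max_sub_max_le_abs y x 1
  rwa [abs_of_nonneg (sub_nonneg.2 (max_le_max_right 1 hxy)), abs_of_nonneg (sub_nonneg.2 hxy)]
    at this

lemma exists_Icc_cos_log_sub_ge {p ε : ℝ} (hp : 0 ≤ p) (hε : 0 < ε) (hεπ : ε ≤ π) (S : ℝ) :
    ∃ u₁ u₂, 1 ≤ u₁ ∧ u₁ ≤ u₂ ∧ S ≤ u₂ - u₁ ∧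
      ∀ u ∈ Icc u₁ u₂, cos ε ≤ cos (log u - p) := by
  set C := exp (p + ε) - exp (p - ε)
  have hC : 0 < C := sub_pos.2 (exp_lt_exp.2 (by linarith))
  have hgrowth : Tendsto (fun n : ℕ => exp (2 * π * n)) atTop atTop :=
    tendsto_exp_atTop.comp (tendsto_natCast_atTop_atTop.const_mul_atTop two_pi_pos)
  obtain ⟨n, hnS, hn⟩ :=
    ((hgrowth.eventually_ge_atTop (S / C)).and (eventually_ge_atTop 1)).exists
  have hn' : (1 : ℝ) ≤ n := by exact_mod_cast hn
  refine ⟨exp (p - ε + 2 * π * n), exp (p + ε + 2 * π * n), ?_, ?_, ?_, ?_⟩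
  · exact one_le_exp (by nlinarith [pi_pos])
  · exact exp_le_exp.2 (by linarith)
  · have hlen : exp (p + ε + 2 * π * n) - exp (p - ε + 2 * π * n) = C * exp (2 * π * n) := by
      simp only [C, exp_add]; ring
    rw [hlen, ← div_le_iff₀' hC]
    exact hnS
  · rintro u ⟨hu₁, hu₂⟩
    have hu : 0 < u := (exp_pos _).trans_le hu₁
    have hlo := (le_log_iff_exp_le hu).2 hu₁
    have hhi := (log_le_iff_le_exp hu).2 hu₂
    have hperiod : cos (log u - p) = cos (log u - p - 2 * π * n) := by
      rw [← cos_add_nat_mul_two_pi (log u - p - 2 * π * n) n]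
      ring_nf
    rw [hperiod, ← cos_abs (log u - p - 2 * π * n)]
    exact cos_le_cos_of_nonneg_of_le_pi (abs_nonneg _) hεπ (abs_le.2 ⟨by linarith, by linarith⟩)

lemma exists_mul_sub_le_mulSinLog_sub {ε : ℝ} (hε : 0 < ε) (hεπ : ε ≤ π) (S : ℝ) :
    ∃ u₁ u₂, 1 ≤ u₁ ∧ u₁ ≤ u₂ ∧ S ≤ u₂ - u₁ ∧
      √2 * cos ε * (u₂ - u₁) ≤ mulSinLog u₂ - mulSinLog u₁ := by
  obtain ⟨u₁, u₂, hu₁, hu₁₂, hS, hcos⟩ :=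
    exists_Icc_cos_log_sub_ge (by positivity : 0 ≤ π / 4) hε hεπ S
  exact ⟨u₁, u₂, hu₁, hu₁₂, hS, mul_sub_le_mulSinLog_sub (one_pos.trans_le hu₁) hu₁₂
    fun u hu => mul_le_mul_of_nonneg_left (hcos u hu) (sqrt_nonneg 2)⟩

lemma exists_mulSinLog_sub_le_neg_mul_sub {ε : ℝ} (hε : 0 < ε) (hεπ : ε ≤ π) (S : ℝ) :
    ∃ u₁ u₂, 1 ≤ u₁ ∧ u₁ ≤ u₂ ∧ S ≤ u₂ - u₁ ∧
      mulSinLog u₂ - mulSinLog u₁ ≤ -(√2 * cos ε) * (u₂ - u₁) := by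
  obtain ⟨u₁, u₂, hu₁, hu₁₂, hS, hcos⟩ :=
    exists_Icc_cos_log_sub_ge (by positivity : 0 ≤ 5 * π / 4) hε hεπ S
  refine ⟨u₁, u₂, hu₁, hu₁₂, hS, mulSinLog_sub_le_mul_sub (one_pos.trans_le hu₁) hu₁₂
    fun u hu => ?_⟩
  have hshift : cos (log u - π / 4) = -cos (log u - 5 * π / 4) := by
    rw [← cos_add_pi]; ring_nf
  rw [hshift, mul_neg, neg_le_neg_iff]
  exact mul_le_mul_of_nonneg_left (hcos u hu) (sqrt_nonneg 2)

noncomputable def oscExponent (θ δ u : ℝ) : ℝ := θ * u + δ * mulSinLog (max u 1)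

lemma alphaOsc1_exp (θ δ u : ℝ) :
    alphaOsc1 θ δ (exp u) = exp (oscExponent θ δ u) := by
  unfold alphaOsc1 oscExponent mulSinLog
  rw [rpow_def_of_pos (exp_pos _), rpow_def_of_pos (exp_pos _), log_exp]
  split_ifs with h
  · rw [max_eq_left (exp_lt_exp.1 h).le]
    congr 1
    ring
  · rw [max_eq_right (not_lt.1 (mt exp_lt_exp.2 h))]; simp [mul_comm]

lemma alphaOsc1_exp_mul_exp_div (θ δ s u : ℝ) :
    alphaOsc1 θ δ (exp s * exp u) / alphaOsc1 θ δ (exp u)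
      = exp (oscExponent θ δ (s + u) - oscExponent θ δ u) := by
  rw [← exp_add, alphaOsc1_exp, alphaOsc1_exp, exp_sub]

lemma oscExponent_add_sub_mem_Icc (θ : ℝ) {δ s : ℝ} (hδ : 0 ≤ δ) (hs : 0 ≤ s) (u : ℝ) :
    oscExponent θ δ (s + u) - oscExponent θ δ u ∈ Icc ((θ - √2 * δ) * s) ((θ + √2 * δ) * s) := by
  have hQ := abs_le.1 (abs_mulSinLog_max_sub_le (le_add_of_nonneg_left hs : u ≤ s + u))
  simp only [add_sub_cancel_right] at hQ
  unfold oscExponent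
  constructor <;> nlinarith [mul_le_mul_of_nonneg_left hQ.1 hδ, mul_le_mul_of_nonneg_left hQ.2 hδ]

lemma oscExponent_sub_of_one_le (θ δ : ℝ) {u₁ u₂ : ℝ} (hu₁ : 1 ≤ u₁) (hu₁₂ : u₁ ≤ u₂) :
    oscExponent θ δ u₂ - oscExponent θ δ u₁
      = θ * (u₂ - u₁) + δ * (mulSinLog u₂ - mulSinLog u₁) := by
  unfold oscExponent
  rw [max_eq_left hu₁, max_eq_left (hu₁.trans hu₁₂)]
  ring

lemma alphaOsc1_ratio_mem_Icc (θ : ℝ) {δ t l : ℝ} (hδ : 0 ≤ δ) (ht : 1 ≤ t) (hl : 1 ≤ l) :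
    alphaOsc1 θ δ (l * t) / alphaOsc1 θ δ t ∈ Icc (l ^ (θ - √2 * δ)) (l ^ (θ + √2 * δ)) := by
  obtain ⟨s, hs, rfl⟩ : ∃ s, 0 ≤ s ∧ exp s = l := ⟨log l, log_nonneg hl, exp_log (by linarith)⟩
  obtain ⟨u, rfl⟩ : ∃ u, exp u = t := ⟨log t, exp_log (by linarith)⟩
  have h := oscExponent_add_sub_mem_Icc θ hδ hs u
  rw [alphaOsc1_exp_mul_exp_div, ← exp_mul, ← exp_mul, mul_comm s, mul_comm s]
  exact ⟨exp_le_exp.2 h.1, exp_le_exp.2 h.2⟩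

lemma isOR_alphaOsc1 (θ : ℝ) {δ : ℝ} (hδ : 0 ≤ δ) : IsOR (alphaOsc1 θ δ) := by
  refine ⟨?_, fun t ht => ?_, exp 1, one_lt_exp_iff.2 one_pos,
    exp (|θ| + √2 * δ), one_le_exp (by positivity), fun t ht l hl hle => ?_⟩
  · have hmeas : Measurable (alphaOsc1 θ δ) := by
      unfold alphaOsc1
      exact Measurable.ite measurableSet_Ioi (by fun_prop) (by fun_prop)
    exact hmeas.comp measurable_subtype_coe
  · unfold alphaOsc1
    split_ifs <;> exact rpow_pos_of_pos (by linarith) _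
  · obtain ⟨hlo, hhi⟩ := alphaOsc1_ratio_mem_Icc θ hδ ht hl
    have hlog₀ : 0 ≤ log l := log_nonneg hl
    have hlog₁ : log l ≤ 1 := (log_le_log (by linarith) hle).trans (log_exp 1).le
    have hbound : ∀ r, |r| ≤ |θ| + √2 * δ → |log l * r| ≤ |θ| + √2 * δ := fun r hr => by
      rw [abs_mul, abs_of_nonneg hlog₀]
      exact (mul_le_of_le_one_left (abs_nonneg r) hlog₁).trans hr
    have hsq := mul_nonneg (sqrt_nonneg 2) hδ
    have hlo' := hbound (θ - √2 * δ) ((abs_sub _ _).trans (by rw [abs_of_nonneg hsq]))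
    have hhi' := hbound (θ + √2 * δ) ((abs_add_le _ _).trans (by rw [abs_of_nonneg hsq]))
    rw [rpow_def_of_pos (by linarith)] at hlo hhi
    rw [← exp_neg]
    exact ⟨(exp_le_exp.2 (neg_le_of_abs_le hlo')).trans hlo,
      hhi.trans (exp_le_exp.2 (le_of_abs_le hhi'))⟩

lemma add_le_of_forall_add_mul_cos_le {a b c : ℝ} (h : ∀ ε ∈ Ioo 0 π, a + b * cos ε ≤ c) :
    a + b ≤ c := by
  have hcont : Continuous fun ε => a + b * cos ε := by fun_prop
  have hlim : Tendsto (fun ε => a + b * cos ε) (𝓝[>] 0) (𝓝 (a + b)) :=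
    (hcont.tendsto' 0 (a + b) (by simp)).mono_left nhdsWithin_le_nhds
  exact le_of_tendsto hlim (eventually_of_mem (Ioo_mem_nhdsGT pi_pos) h)

lemma le_sub_of_mem_lowerMSet_alphaOsc1 (θ : ℝ) {δ r : ℝ} (hδ : 0 ≤ δ)
    (hr : r ∈ lowerMSet (alphaOsc1 θ δ)) : r ≤ θ - √2 * δ := by
  obtain ⟨c, hc, H⟩ := hr
  have hcos : ∀ ε ∈ Ioo 0 π, r + √2 * δ * cos ε ≤ θ := by
    rintro ε ⟨hε, hεπ⟩
    refine le_of_forall_exists_mul_le_mul_add (C := -log c) fun S => ?_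
    obtain ⟨u₁, u₂, hu₁, hu₁₂, hS, hQ⟩ := exists_mulSinLog_sub_le_neg_mul_sub hε hεπ.le S
    refine ⟨u₂ - u₁, hS, ?_⟩
    have hH := H (exp u₁) (one_le_exp (by linarith)) (exp (u₂ - u₁)) (one_le_exp (by linarith))
    rw [alphaOsc1_exp_mul_exp_div, sub_add_cancel, oscExponent_sub_of_one_le θ δ hu₁ hu₁₂,
      ← exp_mul, ← exp_log hc, ← exp_add, exp_le_exp] at hH
    linarith [mul_le_mul_of_nonneg_left hQ hδ]
  linarith [add_le_of_forall_add_mul_cos_le hcos]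

lemma add_le_of_mem_upperMSet_alphaOsc1 (θ : ℝ) {δ r : ℝ} (hδ : 0 ≤ δ)
    (hr : r ∈ upperMSet (alphaOsc1 θ δ)) : θ + √2 * δ ≤ r := by
  obtain ⟨c, hc, H⟩ := hr
  have hcos : ∀ ε ∈ Ioo 0 π, θ + √2 * δ * cos ε ≤ r := by
    rintro ε ⟨hε, hεπ⟩
    refine le_of_forall_exists_mul_le_mul_add (C := log c) fun S => ?_
    obtain ⟨u₁, u₂, hu₁, hu₁₂, hS, hQ⟩ := exists_mul_sub_le_mulSinLog_sub hε hεπ.le S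
    refine ⟨u₂ - u₁, hS, ?_⟩
    have hH := H (exp u₁) (one_le_exp (by linarith)) (exp (u₂ - u₁)) (one_le_exp (by linarith))
    rw [alphaOsc1_exp_mul_exp_div, sub_add_cancel, oscExponent_sub_of_one_le θ δ hu₁ hu₁₂,
      ← exp_mul, ← exp_log hc, ← exp_add, exp_le_exp] at hH
    linarith [mul_le_mul_of_nonneg_left hQ hδ]
  exact add_le_of_forall_add_mul_cos_le hcos

lemma isGreatest_lowerMSet_alphaOsc1 (θ : ℝ) {δ : ℝ} (hδ : 0 ≤ δ) :
    IsGreatest (lowerMSet (alphaOsc1 θ δ)) (θ - √2 * δ) :=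
  ⟨⟨1, one_pos, fun _ ht _ hl => by
    rw [one_mul]; exact (alphaOsc1_ratio_mem_Icc θ hδ ht hl).1⟩,
    fun _ => le_sub_of_mem_lowerMSet_alphaOsc1 θ hδ⟩

lemma isLeast_upperMSet_alphaOsc1 (θ : ℝ) {δ : ℝ} (hδ : 0 ≤ δ) :
    IsLeast (upperMSet (alphaOsc1 θ δ)) (θ + √2 * δ) :=
  ⟨⟨1, one_pos, fun _ ht _ hl => by
    rw [one_mul]; exact (alphaOsc1_ratio_mem_Icc θ hδ ht hl).2⟩,
    fun _ => add_le_of_mem_upperMSet_alphaOsc1 θ hδ⟩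

/-- For `θ ∈ ℝ` and `δ > 0`, the function `alphaOsc1 θ δ` belongs to OR
with `σ₀ = θ − √2·δ` and `σ₁ = θ + √2·δ`. -/
theorem stmt_7 (θ δ : ℝ) (hδ : 0 < δ) :
    IsOR (alphaOsc1 θ δ) ∧
    sigma0 (alphaOsc1 θ δ) = θ - Real.sqrt 2 * δ ∧
    sigma1 (alphaOsc1 θ δ) = θ + Real.sqrt 2 * δ :=
  ⟨isOR_alphaOsc1 θ hδ.le, (isGreatest_lowerMSet_alphaOsc1 θ hδ.le).csSup_eq,
    (isLeast_upperMSet_alphaOsc1 θ hδ.le).csInf_eq⟩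
end

section
/- Let θ ∈ ℝ, δ > 0, and λ > 1. Define α : [1,∞) → (0,∞) by α(t) = t^{θ + δ·sin((log log t)^λ)} if t > e, and α(t) = t^θ if 1 ≤ t ≤ e. Then α does not belong to OR; that is, for all numbers b > 1 and c ≥ 1 there exist t ≥ 1 and μ ∈ [1,b] such that α(μt)/α(t) < c⁻¹ or α(μt)/α(t) > c. -/
/-!
If the ratios `α (l * t) / α t` were bounded by `c` for `l ∈ [1, b]`, chaining steps would give
`log α s ≤ log α t + (log (s / t) / log b + 1) * log c` for `1 ≤ t ≤ s`. Along `t = exp (exp u)`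
we have `log α t = exp u * (θ + δ * sin (u ^ λ))`, and since `λ > 1` the phase `u ^ λ` passes
from a point where the sine is `-1` to one where it is `1` within arbitrarily short `u`-intervals
arbitrarily far out. Across such an interval `[u, v]` the function `log α` grows by at least
`2 * δ * exp u + θ * (exp v - exp u)`, whereas `log (s / t) = exp v - exp u` is `o(exp u)`.
-/

open Real

theorem mul_rpow_sub_one_mul_sub_le_rpow_sub_rpow {p u v : ℝ} (hp : 1 ≤ p) (hu : 0 < u)
    (hv : 0 ≤ v) : p * u ^ (p - 1) * (v - u) ≤ v ^ p - u ^ p := by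
  have bernoulli := one_add_mul_self_le_rpow_one_add
    (show -1 ≤ v / u - 1 by linarith [div_nonneg hv hu.le]) hp
  rw [add_sub_cancel, div_rpow hv hu.le, le_div_iff₀ (rpow_pos_of_pos hu p)] at bernoulli
  have hpow : u ^ p = u ^ (p - 1) * u := by rw [rpow_sub_one hu.ne', div_mul_cancel₀ _ hu.ne']
  calc p * u ^ (p - 1) * (v - u) = (1 + p * (v / u - 1)) * u ^ p - u ^ p := by
        rw [hpow]; field_simp; ring
    _ ≤ v ^ p - u ^ p := by linarith

theorem exists_sin_rpow_eq_neg_one_and_one {p ε : ℝ} (hp : 1 < p) (hε : 0 < ε) (M : ℝ) :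
    ∃ u v, M ≤ u ∧ 0 < u ∧ u ≤ v ∧ v - u ≤ ε ∧ sin (u ^ p) = -1 ∧ sin (v ^ p) = 1 := by
  set N := max (max M 1) ((π / ε) ^ (p - 1)⁻¹)
  have hN : 1 ≤ N := le_max_of_le_left (le_max_right _ _)
  have hp0 : 0 < p := by linarith
  obtain ⟨n, hn⟩ := exists_nat_gt ((N ^ p + π / 2) / (2 * π))
  rw [div_lt_iff₀ (by positivity)] at hn
  obtain ⟨A, hA_def⟩ : ∃ A, A = -(π / 2) + n * (2 * π) := ⟨_, rfl⟩
  have hNA : N ^ p ≤ A := by linarith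
  have hA : 0 < A := lt_of_lt_of_le (rpow_pos_of_pos (by linarith) p) hNA
  set u := A ^ p⁻¹
  set v := (A + π) ^ p⁻¹
  have hu_pow : u ^ p = A := rpow_inv_rpow hA.le hp0.ne'
  have hv_pow : v ^ p = A + π := rpow_inv_rpow (by linarith [pi_pos]) hp0.ne'
  have hNu : N ≤ u := (le_rpow_inv_iff_of_pos (by linarith) hA.le hp0).2 hNA
  have hu : 0 < u := by linarith
  have huv : u ≤ v := rpow_le_rpow hA.le (by linarith [pi_pos]) (by positivity)
  -- the phase `w ↦ w ^ p` has slope at least `π / ε` beyond `u`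
  have hslope : π / ε ≤ u ^ (p - 1) :=
    (rpow_inv_le_iff_of_pos (by positivity) hu.le (by linarith)).1
      (le_trans (le_max_right _ _) hNu)
  have htangent := mul_rpow_sub_one_mul_sub_le_rpow_sub_rpow hp.le hu (hu.le.trans huv)
  rw [hu_pow, hv_pow, add_sub_cancel_left] at htangent
  refine ⟨u, v, le_trans (le_max_of_le_left (le_max_left _ _)) hNu, hu, huv, ?_, ?_, ?_⟩
  · have hnonneg : 0 ≤ u ^ (p - 1) * (v - u) :=
      mul_nonneg (rpow_pos_of_pos hu (p - 1)).le (sub_nonneg.2 huv)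
    have : π / ε * (v - u) ≤ π := by
      nlinarith [mul_le_mul_of_nonneg_right hslope (sub_nonneg.2 huv)]
    rwa [div_mul_eq_mul_div, div_le_iff₀ hε, mul_le_mul_iff_of_pos_left pi_pos] at this
  · rw [hu_pow, hA_def, sin_add_nat_mul_two_pi, sin_neg, sin_pi_div_two]
  · rw [hv_pow, hA_def, show -(π / 2) + n * (2 * π) + π = π / 2 + n * (2 * π) by ring,
      sin_add_nat_mul_two_pi, sin_pi_div_two]

section RatioBound

variable {α : ℝ → ℝ} {b c : ℝ}

theorem le_pow_mul_of_forall_le_mul (hb : 1 ≤ b) (hc : 1 ≤ c) (hα : ∀ t, 1 ≤ t → 0 ≤ α t)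
    (H : ∀ t, 1 ≤ t → ∀ l, 1 ≤ l → l ≤ b → α (l * t) ≤ c * α t) (k : ℕ) {t s : ℝ}
    (ht : 1 ≤ t) (hts : t ≤ s) (hs : s ≤ b ^ k * t) : α s ≤ c ^ k * α t := by
  induction k generalizing s with
  | zero => rw [pow_zero, one_mul] at *; rw [le_antisymm hs hts]
  | succ k ih =>
    by_cases hsk : s ≤ b ^ k * t
    · calc α s ≤ c ^ k * α t := ih hts hsk
        _ ≤ c ^ (k + 1) * α t :=
          mul_le_mul_of_nonneg_right (pow_le_pow_right₀ hc k.le_succ) (hα t ht)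
    · replace hsk := not_le.1 hsk
      have hmid : 1 ≤ b ^ k * t := one_le_mul_of_one_le_of_one_le (one_le_pow₀ hb) ht
      have hstep := H _ hmid (s / (b ^ k * t))
        ((one_le_div (by linarith)).2 hsk.le)
        ((div_le_iff₀ (by linarith)).2 (by rw [pow_succ] at hs; linarith))
      rw [div_mul_cancel₀ _ (by linarith)] at hstep
      calc α s ≤ c * α (b ^ k * t) := hstep
        _ ≤ c * (c ^ k * α t) := by
          have hmid_ge : t ≤ b ^ k * t := le_mul_of_one_le_left (by linarith) (one_le_pow₀ hb)
          exact mul_le_mul_of_nonneg_left (ih hmid_ge le_rfl) (by linarith)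
        _ = c ^ (k + 1) * α t := by ring

theorem log_le_log_add_of_forall_le_mul (hb : 1 < b) (hc : 1 ≤ c) (hα : ∀ t, 1 ≤ t → 0 < α t)
    (H : ∀ t, 1 ≤ t → ∀ l, 1 ≤ l → l ≤ b → α (l * t) ≤ c * α t) {t s : ℝ}
    (ht : 1 ≤ t) (hts : t ≤ s) :
    log (α s) ≤ log (α t) + ((log s - log t) / log b + 1) * log c := by
  have hlogb : 0 < log b := log_pos hb
  set k := ⌈(log s - log t) / log b⌉₊
  have hk : (log s - log t) / log b ≤ k := Nat.le_ceil _
  have hs : s ≤ b ^ k * t := by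
    rw [← log_le_log_iff (by linarith) (by positivity), log_mul (by positivity) (by linarith),
      log_pow]
    rw [div_le_iff₀ hlogb] at hk
    linarith
  have hchain := le_pow_mul_of_forall_le_mul hb.le hc (fun t ht => (hα t ht).le) H k ht hts hs
  have hlog := log_le_log (hα s (ht.trans hts)) hchain
  rw [log_mul (by positivity) (hα t ht).ne', log_pow] at hlog
  have hk' : (k : ℝ) ≤ (log s - log t) / log b + 1 :=
    (Nat.ceil_lt_add_one (div_nonneg (by linarith [log_le_log (by linarith) hts]) hlogb.le)).le
  nlinarith [log_nonneg hc]

end RatioBound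

theorem alphaOsc_pos (θ δ lam : ℝ) {t : ℝ} (ht : 0 < t) : 0 < alphaOsc θ δ lam t := by
  unfold alphaOsc
  split_ifs <;> exact rpow_pos_of_pos ht _

theorem log_alphaOsc_exp_exp (θ δ lam : ℝ) {u : ℝ} (hu : 0 < u) :
    log (alphaOsc θ δ lam (exp (exp u))) = exp u * (θ + δ * sin (u ^ lam)) := by
  rw [alphaOsc, if_pos (exp_lt_exp.2 (one_lt_exp_iff.2 hu)), log_rpow (exp_pos _), log_exp,
    log_exp, mul_comm]

theorem exists_lt_alphaOsc_mul_div {θ δ lam b c : ℝ} (hδ : 0 < δ) (hlam : 1 < lam)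
    (hb : 1 < b) (hc : 1 ≤ c) :
    ∃ t, 1 ≤ t ∧ ∃ μ, 1 ≤ μ ∧ μ ≤ b ∧ c < alphaOsc θ δ lam (μ * t) / alphaOsc θ δ lam t := by
  by_contra! hbounded
  have H : ∀ t, 1 ≤ t → ∀ l, 1 ≤ l → l ≤ b →
      alphaOsc θ δ lam (l * t) ≤ c * alphaOsc θ δ lam t := fun t ht l hl hlb =>
    (div_le_iff₀ (alphaOsc_pos θ δ lam (by linarith))).1 (hbounded t ht l hl hlb)
  set q := log c / log b
  obtain ⟨u, v, hMu, hu, huv, hvu, hsin_u, hsin_v⟩ := exists_sin_rpow_eq_neg_one_and_one hlam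
    (ε := δ / (|q - θ| + 1)) (by positivity) (log c / δ)
  have hgrowth := log_le_log_add_of_forall_le_mul hb hc
    (fun t ht => alphaOsc_pos θ δ lam (by linarith)) H (one_le_exp (exp_pos u).le)
    (exp_le_exp.2 (exp_le_exp.2 huv))
  rw [log_alphaOsc_exp_exp θ δ lam hu, log_alphaOsc_exp_exp θ δ lam (hu.trans_le huv),
    hsin_u, hsin_v, log_exp, log_exp, add_mul, div_mul_eq_mul_div, mul_div_assoc] at hgrowth
  have hgap : exp v - exp u ≤ exp v * (v - u) := by
    have := mul_le_mul_of_nonneg_left (one_sub_le_exp_neg (v - u)) (exp_pos v).le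
    rw [← exp_add, show v + -(v - u) = u by ring] at this
    linarith
  have hdrift : (q - θ) * (exp v - exp u) ≤ δ * exp v := by
    rw [le_div_iff₀ (by positivity)] at hvu
    calc (q - θ) * (exp v - exp u) ≤ |q - θ| * (exp v * (v - u)) :=
          mul_le_mul (le_abs_self _) hgap (by linarith [exp_le_exp.2 huv]) (abs_nonneg _)
      _ ≤ δ * exp v := by nlinarith [exp_pos v, abs_nonneg (q - θ)]
  have hlogc : log c < δ * exp u := by
    rw [div_le_iff₀ hδ] at hMu
    nlinarith [add_one_le_exp u]
  linarith

/-- For `θ ∈ ℝ`, `δ > 0` and `λ > 1`, the function `alphaOsc θ δ λ` does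
not belong to OR: for all `b > 1` and `c ≥ 1` there are `t ≥ 1` and `μ ∈ [1,b]` with
`α(μt)/α(t) < c⁻¹` or `α(μt)/α(t) > c`. -/
theorem stmt_8 (θ δ lam : ℝ) (hδ : 0 < δ) (hlam : 1 < lam) :
    ¬ IsOR (alphaOsc θ δ lam) ∧
    ∀ b : ℝ, 1 < b → ∀ c : ℝ, 1 ≤ c → ∃ t : ℝ, 1 ≤ t ∧ ∃ μ : ℝ, 1 ≤ μ ∧ μ ≤ b ∧
      (alphaOsc θ δ lam (μ * t) / alphaOsc θ δ lam t < c⁻¹ ∨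
        c < alphaOsc θ δ lam (μ * t) / alphaOsc θ δ lam t) := by
  refine ⟨?_, fun b hb c hc => ?_⟩
  · rintro ⟨-, -, b, hb, c, hc, hbounded⟩
    obtain ⟨t, ht, μ, hμ, hμb, hlt⟩ := exists_lt_alphaOsc_mul_div (θ := θ) hδ hlam hb hc
    exact (hbounded t ht μ hμ hμb).2.not_gt hlt
  · obtain ⟨t, ht, μ, hμ, hμb, hlt⟩ := exists_lt_alphaOsc_mul_div (θ := θ) hδ hlam hb hc
    exact ⟨t, ht, μ, hμ, hμb, Or.inr hlt⟩
end

section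
/- Let n ≥ 1 be an integer, s ∈ ℝ, and α ∈ OR, and suppose that ∫₁^∞ α²(t)/t^{2s+1} dt < ∞. Then there exists a constant c > 0 such that for every measurable function v : ℝⁿ → ℂ one has ∫_{ℝⁿ} α²(⟨ξ⟩)·|v(ξ)|² dξ ≤ c · sup_{k ≥ 0} ( 4^{sk} · ∫_{Q_k} |v(ξ)|² dξ ), where the supremum is over all integers k ≥ 0 and both sides are interpreted in [0,∞]. -/
/-!
On the annulus `Q_k` the weight `⟨ξ⟩` is within a factor `2` of `2ᵏ`, and iterating the
O-regular variation bound shows that `α` takes comparable values at points whose ratio is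
bounded. Hence `∫_{Q_k} α²(⟨ξ⟩)|v|² ≲ α(2ᵏ)² 4^{-sk} · sup_j 4^{sj} ∫_{Q_j} |v|²`. The same
comparability gives `α(2ᵏ)² 4^{-sk} ≲ ∫_{2ᵏ}^{2ᵏ⁺¹} α²(t) t^{-2s-1} dt`, so summing over `k`
bounds the left side by a multiple of `∫₁^∞ α²(t) t^{-2s-1} dt` times the supremum.
-/

open MeasureTheory

/-- The smoothed norm `⟨ξ⟩ = (1 + |ξ|²)^{1/2}` on `ℝⁿ`. -/
noncomputable def smoothNorm {n : ℕ} (ξ : EuclideanSpace ℝ (Fin n)) : ℝ :=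
  Real.sqrt (1 + ‖ξ‖ ^ 2)

/-- The dyadic annuli `Q₀ = {|ξ| ≤ 1}` and `Q_k = {2^{k−1} < |ξ| ≤ 2ᵏ}` for `k ≥ 1`. -/
def dyadicAnnulus (n k : ℕ) : Set (EuclideanSpace ℝ (Fin n)) :=
  if k = 0 then {ξ | ‖ξ‖ ≤ 1}
  else {ξ | (2:ℝ) ^ (k - 1) < ‖ξ‖ ∧ ‖ξ‖ ≤ (2:ℝ) ^ k}

lemma pow_mul_bounds_of_mul_bounds {α : ℝ → ℝ} {b c : ℝ} (hc : 0 ≤ c)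
    (h : ∀ t, 1 ≤ t → ∀ l, 1 ≤ l → l ≤ b → α (l * t) ≤ c * α t ∧ α t ≤ c * α (l * t))
    {l : ℝ} (hl : 1 ≤ l) (hlb : l ≤ b) (m : ℕ) {t : ℝ} (ht : 1 ≤ t) :
    α (l ^ m * t) ≤ c ^ m * α t ∧ α t ≤ c ^ m * α (l ^ m * t) := by
  induction m with
  | zero => simp
  | succ m ih =>
    have hlmt : 1 ≤ l ^ m * t := one_le_mul_of_one_le_of_one_le (one_le_pow₀ hl) ht
    obtain ⟨hup, hlow⟩ := h _ hlmt l hl hlb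
    rw [pow_succ' l, mul_assoc]
    constructor
    · calc α (l * (l ^ m * t)) ≤ c * α (l ^ m * t) := hup
        _ ≤ c * (c ^ m * α t) := mul_le_mul_of_nonneg_left ih.1 hc
        _ = c ^ (m + 1) * α t := by ring
    · calc α t ≤ c ^ m * α (l ^ m * t) := ih.2
        _ ≤ c ^ m * (c * α (l * (l ^ m * t))) := mul_le_mul_of_nonneg_left hlow (by positivity)
        _ = c ^ (m + 1) * α (l * (l ^ m * t)) := by ring

namespace IsOR

variable {α : ℝ → ℝ}

lemma exists_mul_bounds (hα : IsOR α) :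
    ∃ b > 1, ∃ c > 0, ∀ t, 1 ≤ t → ∀ l, 1 ≤ l → l ≤ b →
      α (l * t) ≤ c * α t ∧ α t ≤ c * α (l * t) := by
  obtain ⟨-, hpos, b, hb, c, hc, h⟩ := hα
  have hc0 : 0 < c := zero_lt_one.trans_le hc
  refine ⟨b, hb, c, hc0, fun t ht l hl hlb => ?_⟩
  have hαt := hpos t ht
  obtain ⟨hlow, hup⟩ := h t ht l hl hlb
  rw [le_div_iff₀ hαt, inv_mul_le_iff₀ hc0] at hlow
  rw [div_le_iff₀ hαt] at hup
  exact ⟨hup, hlow⟩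

lemma exists_le_mul_of_le_mul (hα : IsOR α) (Λ : ℝ) :
    ∃ C > 0, ∀ t r, 1 ≤ t → 1 ≤ r → r ≤ Λ * t → t ≤ Λ * r → α r ≤ C * α t := by
  obtain ⟨b, hb, c, hc, h⟩ := hα.exists_mul_bounds
  obtain ⟨m, hm⟩ := pow_unbounded_of_one_lt Λ hb
  have key : ∀ t r, 1 ≤ t → t ≤ r → r ≤ Λ * t →
      α r ≤ c ^ (m + 1) * α t ∧ α t ≤ c ^ (m + 1) * α r := by
    intro t r ht htr hrt
    have ht0 : 0 < t := zero_lt_one.trans_le ht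
    have hq : 1 ≤ r / t := (one_le_div ht0).2 htr
    set l := (r / t) ^ ((m + 1 : ℕ)⁻¹ : ℝ)
    have hlm : l ^ (m + 1) * t = r := by
      rw [Real.rpow_inv_natCast_pow (by positivity) m.succ_ne_zero, div_mul_cancel₀ _ ht0.ne']
    have hl : 1 ≤ l := Real.one_le_rpow hq (by positivity)
    have hlb : l ≤ b := by
      refine (pow_le_pow_iff_left₀ (by positivity) (by positivity) m.succ_ne_zero).1 ?_
      rw [Real.rpow_inv_natCast_pow (by positivity) m.succ_ne_zero, div_le_iff₀ ht0]
      calc r ≤ Λ * t := hrt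
        _ ≤ b ^ (m + 1) * t := by gcongr; exact hm.le.trans (pow_le_pow_right₀ hb.le m.le_succ)
    simpa only [hlm] using pow_mul_bounds_of_mul_bounds hc.le h hl hlb (m + 1) ht
  refine ⟨c ^ (m + 1), by positivity, fun t r ht hr hrt htr => ?_⟩
  rcases le_total t r with h | h
  · exact (key t r ht h hrt).1
  · exact (key r t hr h htr).2

end IsOR

section DyadicAnnulus

variable {n k : ℕ} {ξ : EuclideanSpace ℝ (Fin n)}

lemma norm_le_of_mem_dyadicAnnulus (hξ : ξ ∈ dyadicAnnulus n k) : ‖ξ‖ ≤ 2 ^ k := by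
  unfold dyadicAnnulus at hξ
  split_ifs at hξ with hk
  · simpa [hk] using hξ
  · exact hξ.2

lemma lt_norm_of_mem_dyadicAnnulus (hk : k ≠ 0) (hξ : ξ ∈ dyadicAnnulus n k) :
    2 ^ (k - 1) < ‖ξ‖ := by
  simp only [dyadicAnnulus, if_neg hk] at hξ
  exact hξ.1

lemma measurableSet_dyadicAnnulus (n k : ℕ) : MeasurableSet (dyadicAnnulus n k) := by
  unfold dyadicAnnulus
  split_ifs
  · exact measurableSet_le measurable_norm measurable_const
  · exact (measurableSet_lt measurable_const measurable_norm).inter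
      (measurableSet_le measurable_norm measurable_const)

lemma pairwise_disjoint_dyadicAnnulus (n : ℕ) :
    Pairwise (Function.onFun Disjoint (dyadicAnnulus n)) := by
  refine (pairwise_disjoint_on _).2 fun j k hjk => Set.disjoint_left.2 fun ξ hj hk => ?_
  have hjk' : (2:ℝ) ^ j ≤ 2 ^ (k - 1) := pow_le_pow_right₀ one_le_two (by omega)
  linarith [norm_le_of_mem_dyadicAnnulus hj, lt_norm_of_mem_dyadicAnnulus (by omega) hk]

lemma iUnion_dyadicAnnulus (n : ℕ) : ⋃ k, dyadicAnnulus n k = Set.univ := by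
  classical
  refine Set.eq_univ_of_forall fun ξ => Set.mem_iUnion.2 ?_
  have hex : ∃ k : ℕ, ‖ξ‖ ≤ 2 ^ k := (pow_unbounded_of_one_lt ‖ξ‖ one_lt_two).imp fun _ => le_of_lt
  refine ⟨Nat.find hex, ?_⟩
  unfold dyadicAnnulus
  split_ifs with hk
  · simpa [hk] using Nat.find_spec hex
  · exact ⟨not_le.1 (Nat.find_min hex (by omega)), Nat.find_spec hex⟩

lemma one_le_smoothNorm (ξ : EuclideanSpace ℝ (Fin n)) : 1 ≤ smoothNorm ξ :=
  Real.one_le_sqrt.2 (by nlinarith [sq_nonneg ‖ξ‖])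

lemma smoothNorm_le_two_mul_of_mem_dyadicAnnulus (hξ : ξ ∈ dyadicAnnulus n k) :
    smoothNorm ξ ≤ 2 * 2 ^ k := by
  have h1 : (1:ℝ) ≤ 2 ^ k := one_le_pow₀ one_le_two
  have h2 := norm_le_of_mem_dyadicAnnulus hξ
  refine Real.sqrt_le_iff.2 ⟨by positivity, ?_⟩
  nlinarith [norm_nonneg ξ]

lemma two_pow_le_two_mul_smoothNorm_of_mem_dyadicAnnulus (hξ : ξ ∈ dyadicAnnulus n k) :
    2 ^ k ≤ 2 * smoothNorm ξ := by
  rcases Nat.eq_zero_or_pos k with rfl | hk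
  · linarith [one_le_smoothNorm ξ]
  · have hlt := lt_norm_of_mem_dyadicAnnulus hk.ne' hξ
    have hnorm : ‖ξ‖ ≤ smoothNorm ξ := Real.le_sqrt_of_sq_le (by linarith)
    calc (2:ℝ) ^ k = 2 * 2 ^ (k - 1) := by rw [← pow_succ', Nat.sub_add_cancel hk]
      _ ≤ 2 * smoothNorm ξ := by linarith

end DyadicAnnulus

lemma rpow_le_two_rpow_abs_mul_rpow {P t : ℝ} (e : ℝ) (hP : 0 < P) (hPt : P ≤ t)
    (ht : t ≤ 2 * P) : t ^ e ≤ 2 ^ |e| * P ^ e := by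
  have hq : 1 ≤ t / P := (one_le_div hP).2 hPt
  have hq2 : t / P ≤ 2 := (div_le_iff₀ hP).2 (by linarith)
  calc t ^ e = (t / P) ^ e * P ^ e := by
        rw [← Real.mul_rpow (by positivity) hP.le, div_mul_cancel₀ _ hP.ne']
    _ ≤ 2 ^ |e| * P ^ e := by
        gcongr
        calc (t / P) ^ e ≤ (t / P) ^ |e| := Real.rpow_le_rpow_of_exponent_le hq (le_abs_self e)
          _ ≤ 2 ^ |e| := by gcongr

lemma ofReal_sq_mul_rpow_le_setLIntegral_Ico {α : ℝ → ℝ} {C P : ℝ} (e : ℝ) (hC : 0 < C)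
    (hP : 0 < P) (hαP : 0 ≤ α P) (hcomp : ∀ t, P ≤ t → t ≤ 2 * P → α P ≤ C * α t) :
    ENNReal.ofReal (α P ^ 2 * P ^ (1 - e)) ≤
      ENNReal.ofReal (C ^ 2 * 2 ^ |e|) *
        ∫⁻ t in Set.Ico P (2 * P), ENNReal.ofReal (α t ^ 2 / t ^ e) := by
  set K := C ^ 2 * 2 ^ |e|
  have hK : 0 < K := by positivity
  have hPe : 0 < P ^ e := Real.rpow_pos_of_pos hP e
  have hpt : ∀ t ∈ Set.Ico P (2 * P), α P ^ 2 / (K * P ^ e) ≤ α t ^ 2 / t ^ e := by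
    rintro t ⟨hPt, ht⟩
    have hsq : α P ^ 2 ≤ C ^ 2 * α t ^ 2 := by
      rw [← mul_pow]; exact pow_le_pow_left₀ hαP (hcomp t hPt ht.le) 2
    have hte : 0 < t ^ e := Real.rpow_pos_of_pos (hP.trans_le hPt) e
    rw [div_le_div_iff₀ (by positivity) hte]
    calc α P ^ 2 * t ^ e ≤ (C ^ 2 * α t ^ 2) * (2 ^ |e| * P ^ e) :=
          mul_le_mul hsq (rpow_le_two_rpow_abs_mul_rpow e hP hPt ht.le) hte.le (by positivity)
      _ = α t ^ 2 * (K * P ^ e) := by ring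
  calc ENNReal.ofReal (α P ^ 2 * P ^ (1 - e))
      = ENNReal.ofReal K *
          (ENNReal.ofReal (α P ^ 2 / (K * P ^ e)) * volume (Set.Ico P (2 * P))) := by
        rw [Real.volume_Ico, ← ENNReal.ofReal_mul (div_nonneg (sq_nonneg _) (by positivity)),
          ← ENNReal.ofReal_mul hK.le,
          Real.rpow_sub hP, Real.rpow_one]
        congr 1
        field_simp
        ring
    _ ≤ ENNReal.ofReal K * ∫⁻ t in Set.Ico P (2 * P), ENNReal.ofReal (α t ^ 2 / t ^ e) := by
        rw [← setLIntegral_const]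
        exact mul_le_mul_right (setLIntegral_mono' measurableSet_Ico fun t ht =>
          ENNReal.ofReal_le_ofReal (hpt t ht)) _

lemma tsum_setLIntegral_Ico_two_pow_le (f : ℝ → ENNReal) :
    ∑' k : ℕ, ∫⁻ t in Set.Ico (2 ^ k) (2 * 2 ^ k), f t ≤ ∫⁻ t in Set.Ici 1, f t := by
  have hdisj := (pow_right_mono₀ (one_le_two (α := ℝ))).pairwise_disjoint_on_Ico_succ
  simp only [Order.succ_eq_add_one, pow_succ'] at hdisj
  rw [← lintegral_iUnion (fun _ => measurableSet_Ico) hdisj]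
  exact lintegral_mono_set (Set.iUnion_subset fun k t ht => (one_le_pow₀ one_le_two).trans ht.1)

lemma two_pow_rpow_mul_four_rpow (s : ℝ) (k : ℕ) :
    ((2:ℝ) ^ k) ^ (1 - (2 * s + 1)) * (4:ℝ) ^ (s * k) = 1 := by
  rw [show (4:ℝ) = 2 ^ (2:ℝ) by norm_num, ← Real.rpow_mul two_pos.le, ← Real.rpow_natCast,
    ← Real.rpow_mul two_pos.le, ← Real.rpow_add two_pos]
  ring_nf
  exact Real.rpow_zero 2

section Comparison

variable {α : ℝ → ℝ} {C : ℝ}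

lemma ofReal_sq_le_mul_setLIntegral_Ico_two_pow (hα0 : ∀ t, 1 ≤ t → 0 ≤ α t) (hC0 : 0 < C)
    (hC : ∀ t r, 1 ≤ t → 1 ≤ r → r ≤ 2 * t → t ≤ 2 * r → α r ≤ C * α t) (s : ℝ) (k : ℕ) :
    ENNReal.ofReal (α (2 ^ k) ^ 2) ≤
      ENNReal.ofReal (C ^ 2 * 2 ^ |2 * s + 1|) * ENNReal.ofReal ((4:ℝ) ^ (s * k)) *
        ∫⁻ t in Set.Ico (2 ^ k) (2 * 2 ^ k), ENNReal.ofReal (α t ^ 2 / t ^ (2 * s + 1)) := by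
  have hP : (1:ℝ) ≤ 2 ^ k := one_le_pow₀ one_le_two
  have h := ofReal_sq_mul_rpow_le_setLIntegral_Ico (2 * s + 1) hC0 (by positivity) (hα0 _ hP)
    fun t h1 h2 => hC t _ (hP.trans h1) hP (by linarith) h2
  calc ENNReal.ofReal (α (2 ^ k) ^ 2)
      = ENNReal.ofReal (α (2 ^ k) ^ 2 * ((2:ℝ) ^ k) ^ (1 - (2 * s + 1))) *
          ENNReal.ofReal ((4:ℝ) ^ (s * k)) := by
        rw [← ENNReal.ofReal_mul (by positivity), mul_assoc, two_pow_rpow_mul_four_rpow, mul_one]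
    _ ≤ _ := by
        rw [mul_right_comm]
        exact mul_le_mul_left h _

variable {n k : ℕ} {F : Type*} [Norm F]

lemma setLIntegral_dyadicAnnulus_le (hα0 : ∀ t, 1 ≤ t → 0 ≤ α t)
    (hC : ∀ t r, 1 ≤ t → 1 ≤ r → r ≤ 2 * t → t ≤ 2 * r → α r ≤ C * α t)
    (v : EuclideanSpace ℝ (Fin n) → F) :
    ∫⁻ ξ in dyadicAnnulus n k, ENNReal.ofReal (α (smoothNorm ξ) ^ 2 * ‖v ξ‖ ^ 2) ≤
      ENNReal.ofReal (C ^ 2 * α (2 ^ k) ^ 2) *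
        ∫⁻ ξ in dyadicAnnulus n k, ENNReal.ofReal (‖v ξ‖ ^ 2) := by
  rw [← lintegral_const_mul' _ _ ENNReal.ofReal_ne_top]
  refine setLIntegral_mono' (measurableSet_dyadicAnnulus n k) fun ξ hξ => ?_
  have hξ1 := one_le_smoothNorm ξ
  have hle : α (smoothNorm ξ) ≤ C * α (2 ^ k) :=
    hC _ _ (one_le_pow₀ one_le_two) hξ1 (smoothNorm_le_two_mul_of_mem_dyadicAnnulus hξ)
      (two_pow_le_two_mul_smoothNorm_of_mem_dyadicAnnulus hξ)
  rw [← ENNReal.ofReal_mul (by positivity), ← mul_pow C]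
  exact ENNReal.ofReal_le_ofReal (mul_le_mul_of_nonneg_right
    (pow_le_pow_left₀ (hα0 _ hξ1) hle 2) (sq_nonneg _))

lemma setLIntegral_dyadicAnnulus_le_mul_iSup (hα0 : ∀ t, 1 ≤ t → 0 ≤ α t) (hC0 : 0 < C)
    (hC : ∀ t r, 1 ≤ t → 1 ≤ r → r ≤ 2 * t → t ≤ 2 * r → α r ≤ C * α t) (s : ℝ)
    (v : EuclideanSpace ℝ (Fin n) → F) :
    ∫⁻ ξ in dyadicAnnulus n k, ENNReal.ofReal (α (smoothNorm ξ) ^ 2 * ‖v ξ‖ ^ 2) ≤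
      ENNReal.ofReal (C ^ 2 * (C ^ 2 * 2 ^ |2 * s + 1|)) *
        (∫⁻ t in Set.Ico (2 ^ k) (2 * 2 ^ k), ENNReal.ofReal (α t ^ 2 / t ^ (2 * s + 1))) *
        ⨆ j : ℕ, ENNReal.ofReal ((4:ℝ) ^ (s * (j:ℝ))) *
          ∫⁻ ξ in dyadicAnnulus n j, ENNReal.ofReal (‖v ξ‖ ^ 2) := by
  set I := ∫⁻ t in Set.Ico (2 ^ k) (2 * 2 ^ k), ENNReal.ofReal (α t ^ 2 / t ^ (2 * s + 1))
  set J : ℕ → ENNReal := fun j => ∫⁻ ξ in dyadicAnnulus n j, ENNReal.ofReal (‖v ξ‖ ^ 2)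
  calc _ ≤ ENNReal.ofReal (C ^ 2) * ENNReal.ofReal (α (2 ^ k) ^ 2) * J k := by
        rw [← ENNReal.ofReal_mul (by positivity)]; exact setLIntegral_dyadicAnnulus_le hα0 hC v
    _ ≤ ENNReal.ofReal (C ^ 2) * (ENNReal.ofReal (C ^ 2 * 2 ^ |2 * s + 1|) *
          ENNReal.ofReal ((4:ℝ) ^ (s * k)) * I) * J k := by
        gcongr; exact ofReal_sq_le_mul_setLIntegral_Ico_two_pow hα0 hC0 hC s k
    _ = ENNReal.ofReal (C ^ 2 * (C ^ 2 * 2 ^ |2 * s + 1|)) * I *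
          (ENNReal.ofReal ((4:ℝ) ^ (s * k)) * J k) := by
        rw [ENNReal.ofReal_mul (p := C ^ 2) (q := C ^ 2 * 2 ^ |2 * s + 1|) (by positivity)]; ring
    _ ≤ _ := by
        gcongr; exact le_iSup (fun j : ℕ => ENNReal.ofReal ((4:ℝ) ^ (s * (j:ℝ))) * J j) k

end Comparison

theorem stmt_12_general (n : ℕ) (s : ℝ) (α : ℝ → ℝ) (hα : IsOR α)
    (hint : (∫⁻ t in Set.Ici (1:ℝ), ENNReal.ofReal (α t ^ 2 / t ^ (2 * s + 1))) < ⊤) :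
    ∃ c : ℝ, 0 < c ∧ ∀ v : EuclideanSpace ℝ (Fin n) → ℂ, Measurable v →
      (∫⁻ ξ, ENNReal.ofReal (α (smoothNorm ξ) ^ 2 * ‖v ξ‖ ^ 2)) ≤
        ENNReal.ofReal c *
          ⨆ k : ℕ, ENNReal.ofReal ((4:ℝ) ^ (s * (k:ℝ))) *
            ∫⁻ ξ in dyadicAnnulus n k, ENNReal.ofReal (‖v ξ‖ ^ 2) := by
  obtain ⟨C, hC0, hC⟩ := hα.exists_le_mul_of_le_mul 2
  have hα0 : ∀ t, 1 ≤ t → 0 ≤ α t := fun t ht => (hα.2.1 t ht).le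
  set T := ∫⁻ t in Set.Ici (1:ℝ), ENNReal.ofReal (α t ^ 2 / t ^ (2 * s + 1))
  set K := C ^ 2 * (C ^ 2 * 2 ^ |2 * s + 1|)
  have hK0 : 0 < K := by positivity
  refine ⟨K * (T.toReal + 1), by positivity, fun v _ => ?_⟩
  set S := ⨆ k : ℕ, ENNReal.ofReal ((4:ℝ) ^ (s * (k:ℝ))) *
    ∫⁻ ξ in dyadicAnnulus n k, ENNReal.ofReal (‖v ξ‖ ^ 2)
  calc (∫⁻ ξ, ENNReal.ofReal (α (smoothNorm ξ) ^ 2 * ‖v ξ‖ ^ 2))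
      = ∑' k, ∫⁻ ξ in dyadicAnnulus n k, ENNReal.ofReal (α (smoothNorm ξ) ^ 2 * ‖v ξ‖ ^ 2) := by
        rw [← setLIntegral_univ, ← iUnion_dyadicAnnulus n,
          lintegral_iUnion (measurableSet_dyadicAnnulus n) (pairwise_disjoint_dyadicAnnulus n)]
    _ ≤ ∑' k : ℕ, ENNReal.ofReal K * (∫⁻ t in Set.Ico (2 ^ k) (2 * 2 ^ k),
          ENNReal.ofReal (α t ^ 2 / t ^ (2 * s + 1))) * S :=
        ENNReal.tsum_le_tsum fun k => setLIntegral_dyadicAnnulus_le_mul_iSup hα0 hC0 hC s v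
    _ ≤ ENNReal.ofReal K * T * S := by
        rw [ENNReal.tsum_mul_right, ENNReal.tsum_mul_left]
        gcongr
        exact tsum_setLIntegral_Ico_two_pow_le _
    _ ≤ ENNReal.ofReal (K * (T.toReal + 1)) * S := by
        rw [ENNReal.ofReal_mul hK0.le, ENNReal.ofReal_add ENNReal.toReal_nonneg zero_le_one,
          ENNReal.ofReal_toReal hint.ne]
        gcongr
        exact le_self_add

/-- If `α ∈ OR` and `∫₁^∞ α²(t)/t^{2s+1} dt < ∞`, then there is `c > 0`
such that for every measurable `v : ℝⁿ → ℂ`,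
`∫_{ℝⁿ} α²(⟨ξ⟩)|v(ξ)|² dξ ≤ c · sup_k (4^{sk} ∫_{Q_k} |v(ξ)|² dξ)` in `[0,∞]`. -/
theorem stmt_12 (n : ℕ) (hn : 1 ≤ n) (s : ℝ) (α : ℝ → ℝ) (hα : IsOR α)
    (hint : (∫⁻ t in Set.Ici (1:ℝ), ENNReal.ofReal (α t ^ 2 / t ^ (2 * s + 1))) < ⊤) :
    ∃ c : ℝ, 0 < c ∧ ∀ v : EuclideanSpace ℝ (Fin n) → ℂ, Measurable v →
      (∫⁻ ξ, ENNReal.ofReal (α (smoothNorm ξ) ^ 2 * ‖v ξ‖ ^ 2)) ≤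
        ENNReal.ofReal c *
          ⨆ k : ℕ, ENNReal.ofReal ((4:ℝ) ^ (s * (k:ℝ))) *
            ∫⁻ ξ in dyadicAnnulus n k, ENNReal.ofReal (‖v ξ‖ ^ 2) :=
  stmt_12_general n s α hα hint
end

section
/- Let n ≥ 1 be an integer, s ∈ ℝ, and α ∈ OR. Suppose there exists a constant c > 0 such that for every measurable function v : ℝⁿ → ℂ one has ∫_{ℝⁿ} α²(⟨ξ⟩)·|v(ξ)|² dξ ≤ c · sup_{k ≥ 0} ( 4^{sk} · ∫_{Q_k} |v(ξ)|² dξ ), with both sides interpreted in [0,∞]. Then ∫₁^∞ α²(t)/t^{2s+1} dt < ∞. -/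
/-!
Test the inequality against `v(ξ) = |ξ|^{-(s + n/2)}` on `{|ξ| > 1}` (and `0` elsewhere).
On `Q_k` one has `|v|² ≤ 2^{|2s+n|} 2^{-k(2s+n)}` and `|Q_k| ≤ 2^{kn} |B₁|`, so every term
`4^{sk} ∫_{Q_k} |v|²` of the supremum is bounded independently of `k`. On the other side,
O-regular variation gives `α(⟨ξ⟩) ≳ α(|ξ|)` for `|ξ| ≥ 1`, since `⟨ξ⟩ / |ξ| ∈ [1, 2]`, and in polar
coordinates `∫_{|ξ|>1} α²(|ξ|) |ξ|^{-2s-n} dξ` is a positive multiple of `∫₁^∞ α²(t) t^{-2s-1} dt`.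
-/

open MeasureTheory

open Set Metric

def LowerScaleBound (f : ℝ → ℝ) (b κ : ℝ) : Prop :=
  ∀ t, 1 ≤ t → ∀ l ∈ Icc 1 b, κ * f t ≤ f (l * t)

namespace LowerScaleBound

variable {f : ℝ → ℝ} {b κ : ℝ}

theorem mono {L : ℝ} (h : LowerScaleBound f b κ) (hL : L ≤ b) : LowerScaleBound f L κ :=
  fun t ht l hl => h t ht l (Icc_subset_Icc_right hL hl)

theorem pow (h : LowerScaleBound f b κ) (hb : 1 ≤ b) (hκ : 0 ≤ κ) (m : ℕ) :
    LowerScaleBound f (b ^ m) (κ ^ m) := by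
  induction m with
  | zero =>
    intro t _ l hl
    obtain rfl : l = 1 := le_antisymm (by simpa using hl.2) hl.1
    simp
  | succ m ih =>
    intro t ht l hl
    obtain ⟨l₁, hl₁, l₂, hl₂, rfl⟩ : ∃ l₁ ∈ Icc 1 b, ∃ l₂ ∈ Icc 1 (b ^ m), l = l₁ * l₂ := by
      by_cases hlb : l ≤ b
      · exact ⟨l, ⟨hl.1, hlb⟩, 1, ⟨le_rfl, one_le_pow₀ (hl.1.trans hlb)⟩, (mul_one l).symm⟩
      · have hb0 : 0 < b := zero_lt_one.trans_le hb
        refine ⟨b, ⟨hb, le_rfl⟩, l / b, ⟨?_, ?_⟩, by field_simp⟩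
        · rw [le_div_iff₀ hb0]; linarith
        · rw [div_le_iff₀ hb0, ← pow_succ]; exact hl.2
    calc κ ^ (m + 1) * f t = κ * (κ ^ m * f t) := by ring
      _ ≤ κ * f (l₂ * t) := mul_le_mul_of_nonneg_left (ih t ht l₂ hl₂) hκ
      _ ≤ f (l₁ * (l₂ * t)) := h _ (one_le_mul_of_one_le_of_one_le hl₂.1 ht) l₁ hl₁
      _ = f (l₁ * l₂ * t) := by rw [mul_assoc]

end LowerScaleBound

namespace IsOR

variable {α : ℝ → ℝ}

theorem measurable_comp_max_one (hα : IsOR α) : Measurable fun t => α (max t 1) :=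
  hα.1.comp (f := fun t => (⟨max t 1, le_max_right t 1⟩ : Ici (1:ℝ)))
    (measurable_id.max measurable_const).subtype_mk

theorem exists_lowerScaleBound (hα : IsOR α) (L : ℝ) : ∃ κ > 0, LowerScaleBound α L κ := by
  obtain ⟨-, hpos, b, hb, c, hc, hratio⟩ := hα
  have hstep : LowerScaleBound α b c⁻¹ := fun t ht l hl => by
    have := (hratio t ht l hl.1 hl.2).1
    rwa [le_div_iff₀ (hpos t ht)] at this
  obtain ⟨m, hm⟩ := pow_unbounded_of_one_lt L hb
  exact ⟨c⁻¹ ^ m, by positivity, (hstep.pow hb.le (by positivity) m).mono hm.le⟩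

end IsOR

section SmoothNorm

variable {n : ℕ} (ξ : EuclideanSpace ℝ (Fin n))

theorem norm_le_smoothNorm : ‖ξ‖ ≤ smoothNorm ξ :=
  Real.le_sqrt_of_sq_le (by linarith)

theorem smoothNorm_le_two_mul_norm (h : 1 ≤ ‖ξ‖) : smoothNorm ξ ≤ 2 * ‖ξ‖ :=
  Real.sqrt_le_iff.2 ⟨by positivity, by nlinarith⟩

theorem IsOR.exists_mul_le_apply_smoothNorm {α : ℝ → ℝ} (hα : IsOR α) :
    ∃ K > 0, ∀ ξ : EuclideanSpace ℝ (Fin n), 1 ≤ ‖ξ‖ → K * α ‖ξ‖ ≤ α (smoothNorm ξ) := by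
  obtain ⟨K, hK, hbound⟩ := hα.exists_lowerScaleBound 2
  refine ⟨K, hK, fun ξ hξ => ?_⟩
  have hξ0 : 0 < ‖ξ‖ := zero_lt_one.trans_le hξ
  have := hbound ‖ξ‖ hξ (smoothNorm ξ / ‖ξ‖)
    ⟨(one_le_div hξ0).2 (norm_le_smoothNorm ξ),
      (div_le_iff₀ hξ0).2 (smoothNorm_le_two_mul_norm ξ hξ)⟩
  rwa [div_mul_cancel₀ _ hξ0.ne'] at this

end SmoothNorm

theorem Real.rpow_le_two_rpow_abs {x : ℝ} (q : ℝ) (h1 : 1 ≤ x) (h2 : x ≤ 2) : x ^ q ≤ 2 ^ |q| := by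
  rcases le_total 0 q with hq | hq
  · rw [abs_of_nonneg hq]
    exact Real.rpow_le_rpow (zero_le_one.trans h1) h2 hq
  · exact (Real.rpow_le_one_of_one_le_of_nonpos h1 hq).trans
      (Real.one_le_rpow one_le_two (abs_nonneg q))

noncomputable def radialWeight (q r : ℝ) : ℝ :=
  (Ioi 1).indicator (fun r => r ^ (-q)) r

namespace radialWeight

theorem nonneg (q r : ℝ) : 0 ≤ radialWeight q r :=
  indicator_nonneg (fun _ hr => Real.rpow_nonneg (zero_le_one.trans (le_of_lt hr)) _) r

theorem measurable (q : ℝ) : Measurable (radialWeight q) :=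
  (measurable_id.pow_const _).indicator measurableSet_Ioi

theorem eq_of_one_lt {q r : ℝ} (hr : 1 < r) : radialWeight q r = r ^ (-q) :=
  indicator_of_mem hr _

theorem le_two_rpow_abs_mul {q r R : ℝ} (hR : 0 ≤ R) (hrR : r ≤ R) (hRr : 1 < r → R ≤ 2 * r) :
    radialWeight q r ≤ 2 ^ |q| * R ^ (-q) := by
  by_cases hr : 1 < r
  · have hr0 : 0 < r := zero_lt_one.trans hr
    have hR0 : 0 < R := hr0.trans_le hrR
    have hsplit : r ^ (-q) = (R / r) ^ q * R ^ (-q) := by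
      rw [Real.div_rpow hR0.le hr0.le, Real.rpow_neg hr0.le, Real.rpow_neg hR0.le]
      field_simp
    rw [eq_of_one_lt hr, hsplit]
    gcongr
    exact Real.rpow_le_two_rpow_abs q ((one_le_div hr0).2 hrR) ((div_le_iff₀ hr0).2 (hRr hr))
  · rw [radialWeight, indicator_of_notMem (show r ∉ Ioi 1 from hr)]
    positivity

theorem pow_mul_eq_inv_rpow {q t : ℝ} {n : ℕ} (ht : 1 < t) (hn : 1 ≤ n) :
    t ^ (n - 1) * radialWeight q t = (t ^ (q - n + 1))⁻¹ := by
  have ht0 : 0 < t := zero_lt_one.trans ht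
  rw [eq_of_one_lt ht, ← Real.rpow_natCast, ← Real.rpow_add ht0, ← Real.rpow_neg ht0.le,
    Nat.cast_sub hn]
  ring_nf

end radialWeight

section DyadicAnnulus

variable {n k : ℕ} {ξ : EuclideanSpace ℝ (Fin n)}

theorem norm_le_two_pow_of_mem_dyadicAnnulus (h : ξ ∈ dyadicAnnulus n k) : ‖ξ‖ ≤ 2 ^ k := by
  unfold dyadicAnnulus at h
  split_ifs at h with hk
  · simpa [hk] using h
  · exact h.2

theorem two_pow_le_two_mul_norm_of_mem_dyadicAnnulus (h : ξ ∈ dyadicAnnulus n k) (hξ : 1 < ‖ξ‖) :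
    2 ^ k ≤ 2 * ‖ξ‖ := by
  unfold dyadicAnnulus at h
  split_ifs at h with hk
  · exact absurd h (not_le.2 hξ)
  · rw [← Nat.succ_pred_eq_of_ne_zero hk, pow_succ']
    exact (mul_lt_mul_of_pos_left h.1 two_pos).le

theorem four_rpow_mul_natCast (s : ℝ) (k : ℕ) : (4 : ℝ) ^ (s * k) = ((2 : ℝ) ^ k) ^ (2 * s) := by
  rw [← Real.rpow_natCast, ← Real.rpow_mul zero_le_two, show (4 : ℝ) = 2 ^ (2 : ℝ) by norm_num,
    ← Real.rpow_mul zero_le_two]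
  ring_nf

theorem ofReal_four_rpow_mul_lintegral_dyadicAnnulus_le (s : ℝ) (k : ℕ) :
    ENNReal.ofReal ((4 : ℝ) ^ (s * k)) *
        ∫⁻ ξ in dyadicAnnulus n k, ENNReal.ofReal (radialWeight (2 * s + n) ‖ξ‖) ≤
      ENNReal.ofReal (2 ^ |2 * s + n|) * volume (ball (0 : EuclideanSpace ℝ (Fin n)) 1) := by
  set q : ℝ := 2 * s + n
  set R : ℝ := 2 ^ k
  have hR : 0 < R := by positivity
  calc ENNReal.ofReal ((4 : ℝ) ^ (s * k)) *
        ∫⁻ ξ in dyadicAnnulus n k, ENNReal.ofReal (radialWeight q ‖ξ‖)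
      ≤ ENNReal.ofReal ((4 : ℝ) ^ (s * k)) *
          (ENNReal.ofReal (2 ^ |q| * R ^ (-q)) *
            volume (closedBall (0 : EuclideanSpace ℝ (Fin n)) R)) := by
        gcongr
        refine (setLIntegral_mono measurable_const fun ξ hξ => ENNReal.ofReal_le_ofReal
          (radialWeight.le_two_rpow_abs_mul hR.le (norm_le_two_pow_of_mem_dyadicAnnulus hξ)
            (two_pow_le_two_mul_norm_of_mem_dyadicAnnulus hξ))).trans ?_
        rw [setLIntegral_const]
        gcongr
        exact fun ξ hξ => mem_closedBall_zero_iff.2 (norm_le_two_pow_of_mem_dyadicAnnulus hξ)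
    _ = ENNReal.ofReal (R ^ (2 * s) * (2 ^ |q| * R ^ (-q)) * R ^ n) *
          volume (ball (0 : EuclideanSpace ℝ (Fin n)) 1) := by
        rw [Measure.addHaar_closedBall _ _ hR.le, finrank_euclideanSpace_fin, four_rpow_mul_natCast,
          ← mul_assoc, ← mul_assoc, ← ENNReal.ofReal_mul (by positivity),
          ← ENNReal.ofReal_mul (by positivity)]
    _ = ENNReal.ofReal (2 ^ |q|) * volume (ball (0 : EuclideanSpace ℝ (Fin n)) 1) := by
        congr 2
        rw [← Real.rpow_natCast R n, mul_comm (2 ^ |q|), ← mul_assoc, ← Real.rpow_add hR,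
          mul_assoc, mul_comm (2 ^ |q|), ← mul_assoc, ← Real.rpow_add hR]
        simp [q]

end DyadicAnnulus

theorem setLIntegral_Ioi_pow_mul_lt_top_of_lintegral_fun_norm_lt_top {E : Type*}
    [NormedAddCommGroup E] [NormedSpace ℝ E] [MeasurableSpace E] [BorelSpace E]
    [FiniteDimensional ℝ E] [Nontrivial E] (μ : Measure E) [μ.IsAddHaarMeasure] {f : ℝ → ℝ}
    (hf : Measurable f) (hf0 : ∀ r, 0 ≤ f r) (h : ∫⁻ x, ENNReal.ofReal (f ‖x‖) ∂μ < ⊤) :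
    ∫⁻ r in Ioi 0, ENNReal.ofReal (r ^ (Module.finrank ℝ E - 1) * f r) < ⊤ := by
  have hint : Integrable (fun x => f ‖x‖) μ :=
    ⟨(hf.comp measurable_norm).aestronglyMeasurable,
      (hasFiniteIntegral_iff_ofReal (ae_of_all _ fun _ => hf0 _)).2 h⟩
  exact ((integrable_fun_norm_addHaar μ).1 hint).lintegral_lt_top

theorem IsOR.setLIntegral_Ici_lt_top_of_lintegral_smoothNorm_lt_top {α : ℝ → ℝ} (hα : IsOR α)
    {n : ℕ} (hn : 1 ≤ n) (q : ℝ)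
    (h : ∫⁻ ξ : EuclideanSpace ℝ (Fin n),
      ENNReal.ofReal (α (smoothNorm ξ) ^ 2 * radialWeight q ‖ξ‖) < ⊤) :
    ∫⁻ t in Ici 1, ENNReal.ofReal (α t ^ 2 / t ^ (q - n + 1)) < ⊤ := by
  have : Nontrivial (EuclideanSpace ℝ (Fin n)) :=
    Module.nontrivial_of_finrank_pos (R := ℝ) (by rw [finrank_euclideanSpace_fin]; exact hn)
  obtain ⟨K, hK, hαK⟩ := hα.exists_mul_le_apply_smoothNorm (n := n)
  set f : ℝ → ℝ := fun r => α (max r 1) ^ 2 * radialWeight q r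
  have hf_le (ξ : EuclideanSpace ℝ (Fin n)) : ENNReal.ofReal (K ^ 2) * ENNReal.ofReal (f ‖ξ‖) ≤
      ENNReal.ofReal (α (smoothNorm ξ) ^ 2 * radialWeight q ‖ξ‖) := by
    rw [← ENNReal.ofReal_mul (by positivity), ← mul_assoc]
    by_cases hξ : 1 < ‖ξ‖
    · rw [max_eq_left hξ.le, ← mul_pow]
      gcongr
      · exact radialWeight.nonneg _ _
      · exact mul_nonneg hK.le (hα.2.1 _ hξ.le).le
      · exact hαK ξ hξ.le
    · simp [radialWeight, indicator_of_notMem (show ‖ξ‖ ∉ Ioi 1 from hξ)]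
  have hf_fin : ∫⁻ ξ : EuclideanSpace ℝ (Fin n), ENNReal.ofReal (f ‖ξ‖) < ⊤ := by
    refine ENNReal.lt_top_of_mul_ne_top_right (a := ENNReal.ofReal (K ^ 2)) ?_
      (ENNReal.ofReal_pos.2 (by positivity)).ne'
    rw [← lintegral_const_mul' _ _ ENNReal.ofReal_ne_top]
    exact ((lintegral_mono hf_le).trans_lt h).ne
  have hradial := setLIntegral_Ioi_pow_mul_lt_top_of_lintegral_fun_norm_lt_top (f := f) volume
    ((hα.measurable_comp_max_one.pow_const 2).mul (radialWeight.measurable q))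
    (fun r => mul_nonneg (sq_nonneg _) (radialWeight.nonneg q r)) hf_fin
  rw [finrank_euclideanSpace_fin] at hradial
  refine lt_of_le_of_lt ?_ hradial
  rw [← setLIntegral_congr Ioi_ae_eq_Ici]
  refine (setLIntegral_congr_fun measurableSet_Ioi fun t ht => ?_).trans_le
    (lintegral_mono_set (Ioi_subset_Ioi zero_le_one))
  have hft : f t = α t ^ 2 * radialWeight q t := by simp only [f, max_eq_left (mem_Ioi.1 ht).le]
  rw [hft, mul_left_comm, radialWeight.pow_mul_eq_inv_rpow ht hn, div_eq_mul_inv]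

theorem stmt_13_general (n : ℕ) (hn : 1 ≤ n) (s : ℝ) (α : ℝ → ℝ) (hα : IsOR α)
    (c : ℝ)
    (hbound : ∀ v : EuclideanSpace ℝ (Fin n) → ℂ, Measurable v →
      (∫⁻ ξ, ENNReal.ofReal (α (smoothNorm ξ) ^ 2 * ‖v ξ‖ ^ 2)) ≤
        ENNReal.ofReal c *
          ⨆ k : ℕ, ENNReal.ofReal ((4:ℝ) ^ (s * (k:ℝ))) *
            ∫⁻ ξ in dyadicAnnulus n k, ENNReal.ofReal (‖v ξ‖ ^ 2)) :
    (∫⁻ t in Set.Ici (1:ℝ), ENNReal.ofReal (α t ^ 2 / t ^ (2 * s + 1))) < ⊤ := by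
  set v : EuclideanSpace ℝ (Fin n) → ℂ := fun ξ => (√(radialWeight (2 * s + n) ‖ξ‖) : ℂ)
  have hv (ξ : EuclideanSpace ℝ (Fin n)) : ‖v ξ‖ ^ 2 = radialWeight (2 * s + n) ‖ξ‖ := by
    simp [v, Real.sq_sqrt (radialWeight.nonneg _ _)]
  have hv_meas : Measurable v :=
    Complex.measurable_ofReal.comp ((radialWeight.measurable _).comp measurable_norm).sqrt
  have hbv := hbound v hv_meas
  simp only [hv] at hbv
  have hsup := iSup_le (ofReal_four_rpow_mul_lintegral_dyadicAnnulus_le (n := n) s)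
  simpa using hα.setLIntegral_Ici_lt_top_of_lintegral_smoothNorm_lt_top hn (2 * s + n) <|
    hbv.trans_lt (ENNReal.mul_lt_top ENNReal.ofReal_lt_top
      (hsup.trans_lt (ENNReal.mul_lt_top ENNReal.ofReal_lt_top measure_ball_lt_top)))

/-- If `α ∈ OR` and there is `c > 0` such that for every measurable
`v : ℝⁿ → ℂ` one has `∫ α²(⟨ξ⟩)|v|² ≤ c · sup_k (4^{sk} ∫_{Q_k} |v|²)` in `[0,∞]`,
then `∫₁^∞ α²(t)/t^{2s+1} dt < ∞`. -/
theorem stmt_13 (n : ℕ) (hn : 1 ≤ n) (s : ℝ) (α : ℝ → ℝ) (hα : IsOR α)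
    (c : ℝ) (hc : 0 < c)
    (hbound : ∀ v : EuclideanSpace ℝ (Fin n) → ℂ, Measurable v →
      (∫⁻ ξ, ENNReal.ofReal (α (smoothNorm ξ) ^ 2 * ‖v ξ‖ ^ 2)) ≤
        ENNReal.ofReal c *
          ⨆ k : ℕ, ENNReal.ofReal ((4:ℝ) ^ (s * (k:ℝ))) *
            ∫⁻ ξ in dyadicAnnulus n k, ENNReal.ofReal (‖v ξ‖ ^ 2)) :
    (∫⁻ t in Set.Ici (1:ℝ), ENNReal.ofReal (α t ^ 2 / t ^ (2 * s + 1))) < ⊤ :=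
  stmt_13_general n hn s α hα c hbound
end

section
/- Let α ∈ OR and let r₀, r₁ ∈ ℝ satisfy r₀ < σ₀(α) and r₁ > σ₁(α). Define ψ : (0,∞) → (0,∞) by ψ(t) := t^{−r₀/(r₁−r₀)}·α(t^{1/(r₁−r₀)}) for t ≥ 1 and ψ(t) := α(1) for 0 < t < 1. Then ψ is pseudoconcave in a neighbourhood of +∞; that is, there exist a number b > 0 and a concave function ψ₁ : (b,∞) → (0,∞) such that both ψ/ψ₁ and ψ₁/ψ are bounded on (b,∞). -/
open Set

lemma concaveOn_ciInf {E ι : Type*} [AddCommMonoid E] [Module ℝ E] [Nonempty ι] {s : Set E}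
    {f : ι → E → ℝ} (hf : ∀ i, ConcaveOn ℝ s (f i))
    (hbdd : ∀ x ∈ s, BddBelow (range fun i => f i x)) :
    ConcaveOn ℝ s fun x => ⨅ i, f i x := by
  refine ⟨(hf (Classical.arbitrary ι)).1, fun x hx y hy a b ha hb hab => le_ciInf fun i => ?_⟩
  dsimp only
  calc a • (⨅ i, f i x) + b • (⨅ i, f i y) ≤ a • f i x + b • f i y := by
        gcongr
        · exact ciInf_le (hbdd x hx) i
        · exact ciInf_le (hbdd y hy) i
    _ ≤ f i (a • x + b • y) := (hf i).2 hx hy ha hb hab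

lemma apply_mul_le_pow_mul {α : ℝ → ℝ} {b c : ℝ} (hα : ∀ t, 1 ≤ t → 0 ≤ α t) (hb : 1 ≤ b)
    (hc : 1 ≤ c) (h : ∀ t, 1 ≤ t → ∀ l, 1 ≤ l → l ≤ b → α (l * t) ≤ c * α t) :
    ∀ n : ℕ, ∀ t, 1 ≤ t → ∀ l, 1 ≤ l → l ≤ b ^ n → α (l * t) ≤ c ^ n * α t := by
  intro n
  induction n with
  | zero =>
    intro t _ l hl hlb
    rw [le_antisymm (by simpa using hlb) hl]
    simp
  | succ n ih =>
    intro t ht l hl hlb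
    rcases le_or_gt l (b ^ n) with hln | hnl
    · calc α (l * t) ≤ c ^ n * α t := ih t ht l hl hln
        _ ≤ c ^ (n + 1) * α t :=
            mul_le_mul_of_nonneg_right (pow_le_pow_right₀ hc n.le_succ) (hα t ht)
    · have hbn : 1 ≤ b ^ n := one_le_pow₀ hb
      have hbnt : 1 ≤ b ^ n * t := one_le_mul_of_one_le_of_one_le hbn ht
      calc α (l * t) = α (l / b ^ n * (b ^ n * t)) := by
            rw [← mul_assoc, div_mul_cancel₀ _ (by positivity)]
        _ ≤ c * α (b ^ n * t) :=
            h _ hbnt _ ((one_le_div (by positivity)).2 hnl.le)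
              ((div_le_iff₀ (by positivity)).2 (by rwa [← pow_succ']))
        _ ≤ c * (c ^ n * α t) := by gcongr; exact ih t ht _ hbn le_rfl
        _ = c ^ (n + 1) * α t := by ring

lemma logb_mem_upperMSet {α : ℝ → ℝ} {b c : ℝ} (hα : ∀ t, 1 ≤ t → 0 < α t) (hb : 1 < b)
    (hc : 1 ≤ c) (h : ∀ t, 1 ≤ t → ∀ l, 1 ≤ l → l ≤ b → α (l * t) / α t ≤ c) :
    Real.logb b c ∈ upperMSet α := by
  have hmul : ∀ t, 1 ≤ t → ∀ l, 1 ≤ l → l ≤ b → α (l * t) ≤ c * α t := fun t ht l hl hlb =>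
    (div_le_iff₀ (hα t ht)).1 (h t ht l hl hlb)
  refine ⟨c, by linarith, fun t ht l hl => (div_le_iff₀ (hα t ht)).2 ?_⟩
  obtain ⟨n, hnl, hln⟩ := exists_nat_pow_near hl hb
  have hcn : c ^ n ≤ l ^ Real.logb b c := by
    calc c ^ n = (b ^ n) ^ Real.logb b c := by
          rw [← Real.rpow_natCast_mul (by linarith), mul_comm, Real.rpow_mul_natCast (by linarith),
            Real.rpow_logb (by linarith) hb.ne' (by linarith)]
      _ ≤ l ^ Real.logb b c := by
          gcongr
          exact Real.logb_nonneg hb hc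
  calc α (l * t) ≤ c ^ (n + 1) * α t :=
        apply_mul_le_pow_mul (fun t ht => (hα t ht).le) hb.le hc hmul (n + 1) t ht l hl hln.le
    _ ≤ c * l ^ Real.logb b c * α t := by
        rw [pow_succ']
        gcongr
        exact (hα t ht).le

lemma neg_mem_lowerMSet_of_mem_upperMSet_inv {α : ℝ → ℝ} {r : ℝ} (hα : ∀ t, 1 ≤ t → 0 < α t)
    (h : r ∈ upperMSet fun t => (α t)⁻¹) : -r ∈ lowerMSet α := by
  obtain ⟨c, hc, h⟩ := h
  refine ⟨c⁻¹, inv_pos.2 hc, fun t ht l hl => ?_⟩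
  have hlt : 1 ≤ l * t := one_le_mul_of_one_le_of_one_le hl ht
  calc c⁻¹ * l ^ (-r) = (c * l ^ r)⁻¹ := by rw [Real.rpow_neg (by linarith), mul_inv]
    _ ≤ (α t / α (l * t))⁻¹ :=
        inv_anti₀ (div_pos (hα t ht) (hα _ hlt)) (by simpa only [inv_div_inv] using h t ht l hl)
    _ = α (l * t) / α t := inv_div _ _

lemma IsOR.upperMSet_nonempty {α : ℝ → ℝ} (h : IsOR α) : (upperMSet α).Nonempty := by
  obtain ⟨-, hpos, b, hb, c, hc, hbc⟩ := h
  exact ⟨_, logb_mem_upperMSet hpos hb hc fun t ht l hl hlb => (hbc t ht l hl hlb).2⟩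

lemma IsOR.lowerMSet_nonempty {α : ℝ → ℝ} (h : IsOR α) : (lowerMSet α).Nonempty := by
  obtain ⟨-, hpos, b, hb, c, hc, hbc⟩ := h
  refine ⟨_, neg_mem_lowerMSet_of_mem_upperMSet_inv hpos
    (logb_mem_upperMSet (fun t ht => inv_pos.2 (hpos t ht)) hb hc fun t ht l hl hlb => ?_)⟩
  rw [inv_div_inv, ← inv_div]
  exact inv_le_of_inv_le₀ (by linarith) (hbc t ht l hl hlb).1

lemma le_of_mem_lowerMSet_of_mem_upperMSet {α : ℝ → ℝ} {r s : ℝ} (hr : r ∈ lowerMSet α)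
    (hs : s ∈ upperMSet α) : r ≤ s := by
  obtain ⟨c₀, hc₀, h₀⟩ := hr
  obtain ⟨c₁, hc₁, h₁⟩ := hs
  by_contra! hsr
  obtain ⟨l, hlarge, hl⟩ := (((tendsto_rpow_atTop (sub_pos.2 hsr)).eventually_gt_atTop
    (c₁ / c₀)).and (Filter.eventually_ge_atTop 1)).exists
  have hle : c₀ * l ^ (r - s) * l ^ s ≤ c₁ * l ^ s := by
    rw [mul_assoc, ← Real.rpow_add (by linarith), sub_add_cancel]
    exact (h₀ 1 le_rfl l hl).trans (h₁ 1 le_rfl l hl)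
  have := le_of_mul_le_mul_right hle (by positivity)
  rw [div_lt_iff₀' hc₀] at hlarge
  linarith

lemma mem_lowerMSet_of_le {α : ℝ → ℝ} {r r' : ℝ} (h : r ∈ lowerMSet α) (hr : r' ≤ r) :
    r' ∈ lowerMSet α := by
  obtain ⟨c, hc, h⟩ := h
  exact ⟨c, hc, fun t ht l hl => le_trans (by gcongr) (h t ht l hl)⟩

lemma mem_upperMSet_of_le {α : ℝ → ℝ} {r r' : ℝ} (h : r ∈ upperMSet α) (hr : r ≤ r') :
    r' ∈ upperMSet α := by
  obtain ⟨c, hc, h⟩ := h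
  exact ⟨c, hc, fun t ht l hl => (h t ht l hl).trans (by gcongr)⟩

lemma lowerMSet_congr {f g : ℝ → ℝ} (h : EqOn f g (Ici 1)) : lowerMSet f = lowerMSet g := by
  ext r
  refine exists_congr fun c => and_congr_right fun _ => forall₂_congr fun t ht =>
    forall₂_congr fun l hl => ?_
  rw [h ht, h (one_le_mul_of_one_le_of_one_le hl ht)]

lemma upperMSet_congr {f g : ℝ → ℝ} (h : EqOn f g (Ici 1)) : upperMSet f = upperMSet g := by
  ext r
  refine exists_congr fun c => and_congr_right fun _ => forall₂_congr fun t ht =>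
    forall₂_congr fun l hl => ?_
  rw [h ht, h (one_le_mul_of_one_le_of_one_le hl ht)]

lemma rpow_mul_apply_div_rpow_mul_apply (α : ℝ → ℝ) (q : ℝ) {t l : ℝ} (ht : 0 < t) (hl : 0 ≤ l) :
    (l * t) ^ q * α (l * t) / (t ^ q * α t) = l ^ q * (α (l * t) / α t) := by
  rw [Real.mul_rpow hl ht.le, mul_div_mul_comm, mul_div_cancel_right₀ _ (by positivity)]

lemma add_mem_lowerMSet_rpow_mul {α : ℝ → ℝ} {r : ℝ} (q : ℝ) (h : r ∈ lowerMSet α) :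
    r + q ∈ lowerMSet fun x => x ^ q * α x := by
  obtain ⟨c, hc, h⟩ := h
  refine ⟨c, hc, fun t ht l hl => ?_⟩
  rw [rpow_mul_apply_div_rpow_mul_apply α q (by linarith) (by linarith),
    Real.rpow_add (by linarith), mul_comm (l ^ r), mul_left_comm]
  gcongr
  exact h t ht l hl

lemma add_mem_upperMSet_rpow_mul {α : ℝ → ℝ} {r : ℝ} (q : ℝ) (h : r ∈ upperMSet α) :
    r + q ∈ upperMSet fun x => x ^ q * α x := by
  obtain ⟨c, hc, h⟩ := h
  refine ⟨c, hc, fun t ht l hl => ?_⟩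
  rw [rpow_mul_apply_div_rpow_mul_apply α q (by linarith) (by linarith),
    Real.rpow_add (by linarith), mul_comm (l ^ r), mul_left_comm]
  gcongr
  exact h t ht l hl

lemma mul_mem_lowerMSet_comp_rpow {α : ℝ → ℝ} {r κ : ℝ} (hκ : 0 ≤ κ) (h : r ∈ lowerMSet α) :
    κ * r ∈ lowerMSet fun x => α (x ^ κ) := by
  obtain ⟨c, hc, h⟩ := h
  refine ⟨c, hc, fun t ht l hl => ?_⟩
  dsimp only
  rw [Real.mul_rpow (by linarith) (by linarith), Real.rpow_mul (by linarith)]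
  exact h _ (Real.one_le_rpow ht hκ) _ (Real.one_le_rpow hl hκ)

lemma mul_mem_upperMSet_comp_rpow {α : ℝ → ℝ} {r κ : ℝ} (hκ : 0 ≤ κ) (h : r ∈ upperMSet α) :
    κ * r ∈ upperMSet fun x => α (x ^ κ) := by
  obtain ⟨c, hc, h⟩ := h
  refine ⟨c, hc, fun t ht l hl => ?_⟩
  dsimp only
  rw [Real.mul_rpow (by linarith) (by linarith), Real.rpow_mul (by linarith)]
  exact h _ (Real.one_le_rpow ht hκ) _ (Real.one_le_rpow hl hκ)

theorem exists_concaveOn_of_zero_mem_lowerMSet_of_one_mem_upperMSet {ψ : ℝ → ℝ}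
    (hψ : ∀ t, 1 ≤ t → 0 < ψ t) (h₀ : 0 ∈ lowerMSet ψ) (h₁ : 1 ∈ upperMSet ψ) :
    ∃ φ : ℝ → ℝ, ConcaveOn ℝ (Ici 1) φ ∧ ∃ C, ∀ t, 1 ≤ t → ψ t ≤ φ t ∧ φ t ≤ C * ψ t := by
  obtain ⟨c₀, hc₀, h₀⟩ := h₀
  obtain ⟨c₁, hc₁, h₁⟩ := h₁
  have hmaj : ∀ s t, 1 ≤ s → 1 ≤ t → ψ t ≤ c₁ * ψ s / s * t + ψ s / c₀ := by
    intro s t hs ht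
    have hψs := hψ s hs
    rcases le_total s t with hst | hts
    · have := h₁ s hs (t / s) ((one_le_div (by linarith)).2 hst)
      rw [div_mul_cancel₀ _ (by linarith), Real.rpow_one, div_le_iff₀ hψs] at this
      calc ψ t ≤ c₁ * (t / s) * ψ s := this
        _ = c₁ * ψ s / s * t := by ring
        _ ≤ _ := le_add_of_nonneg_right (by positivity)
    · have := h₀ t ht (s / t) ((one_le_div (by linarith)).2 hts)
      rw [div_mul_cancel₀ _ (by linarith), Real.rpow_zero, mul_one, le_div_iff₀ (hψ t ht)] at this
      calc ψ t ≤ ψ s / c₀ := (le_div_iff₀' hc₀).2 this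
        _ ≤ _ := le_add_of_nonneg_left (by positivity)
  have hbdd : ∀ t ∈ Ici (1 : ℝ),
      BddBelow (range fun s : Ici (1 : ℝ) => c₁ * ψ s / s * t + ψ s / c₀) :=
    fun t ht => ⟨ψ t, forall_mem_range.2 fun s => hmaj s t s.2 ht⟩
  refine ⟨fun t => ⨅ s : Ici (1 : ℝ), c₁ * ψ s / s * t + ψ s / c₀,
    concaveOn_ciInf (fun s => ((LinearMap.mul ℝ ℝ _).concaveOn (convex_Ici 1)).add_const _) hbdd,
    c₁ + c₀⁻¹, fun t ht => ⟨le_ciInf fun s => hmaj s t s.2 ht, ?_⟩⟩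
  have ht0 : t ≠ 0 := by positivity
  calc ⨅ s : Ici (1 : ℝ), c₁ * ψ s / s * t + ψ s / c₀
      ≤ c₁ * ψ t / t * t + ψ t / c₀ := ciInf_le (hbdd t ht) ⟨t, ht⟩
    _ = (c₁ + c₀⁻¹) * ψ t := by field_simp

/-- If `α ∈ OR`, `r₀ < σ₀(α)`, `r₁ > σ₁(α)`, and
`ψ(t) = t^{−r₀/(r₁−r₀)}·α(t^{1/(r₁−r₀)})` for `t ≥ 1`, `ψ(t) = α(1)` for `0 < t < 1`,
then `ψ` is pseudoconcave in a neighbourhood of `+∞`. -/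
theorem stmt_15 (α : ℝ → ℝ) (hα : IsOR α) (r₀ r₁ : ℝ)
    (h0 : r₀ < sigma0 α) (h1 : sigma1 α < r₁)
    (ψ : ℝ → ℝ)
    (hψ : ∀ t : ℝ, 0 < t →
      ψ t = if 1 ≤ t then t ^ (-r₀ / (r₁ - r₀)) * α (t ^ (1 / (r₁ - r₀))) else α 1) :
    ∃ b : ℝ, 0 < b ∧ ∃ ψ₁ : ℝ → ℝ,
      ConcaveOn ℝ (Set.Ioi b) ψ₁ ∧ (∀ t, b < t → 0 < ψ₁ t) ∧
      (∃ M : ℝ, ∀ t, b < t → ψ t / ψ₁ t ≤ M) ∧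
      (∃ M : ℝ, ∀ t, b < t → ψ₁ t / ψ t ≤ M) := by
  obtain ⟨s₀, hs₀, hr₀s₀⟩ := exists_lt_of_lt_csSup hα.lowerMSet_nonempty h0
  obtain ⟨s₁, hs₁, hs₁r₁⟩ := exists_lt_of_csInf_lt hα.upperMSet_nonempty h1
  have hρ : 0 < r₁ - r₀ := sub_pos.2 <|
    hr₀s₀.trans ((le_of_mem_lowerMSet_of_mem_upperMSet hs₀ hs₁).trans_lt hs₁r₁)
  have hψφ :
      EqOn ψ (fun t => (t ^ (1 / (r₁ - r₀))) ^ (-r₀) * α (t ^ (1 / (r₁ - r₀)))) (Ici 1) := by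
    intro t (ht : 1 ≤ t)
    dsimp only
    rw [hψ t (by linarith), if_pos ht, ← Real.rpow_mul (by linarith), one_div_mul_eq_div]
  have hψpos : ∀ t, 1 ≤ t → 0 < ψ t := fun t ht => by
    rw [hψφ ht]
    exact mul_pos (by positivity) (hα.2.1 _ (Real.one_le_rpow ht (by positivity)))
  have hψ₀ : 0 ∈ lowerMSet ψ := by
    have := mul_mem_lowerMSet_comp_rpow (one_div_nonneg.2 hρ.le)
      (add_mem_lowerMSet_rpow_mul (-r₀) (mem_lowerMSet_of_le hs₀ hr₀s₀.le))
    rwa [add_neg_cancel, mul_zero, ← lowerMSet_congr hψφ] at this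
  have hψ₁ : 1 ∈ upperMSet ψ := by
    have := mul_mem_upperMSet_comp_rpow (one_div_nonneg.2 hρ.le)
      (add_mem_upperMSet_rpow_mul (-r₀) (mem_upperMSet_of_le hs₁ hs₁r₁.le))
    rwa [← sub_eq_add_neg, one_div_mul_cancel hρ.ne', ← upperMSet_congr hψφ] at this
  obtain ⟨φ, hφ, C, hψφC⟩ :=
    exists_concaveOn_of_zero_mem_lowerMSet_of_one_mem_upperMSet hψpos hψ₀ hψ₁
  have hφpos : ∀ t, 1 < t → 0 < φ t := fun t ht => (hψpos t ht.le).trans_le (hψφC t ht.le).1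
  refine ⟨1, one_pos, φ, hφ.subset Ioi_subset_Ici_self (convex_Ioi 1), hφpos,
    ⟨1, fun t ht => (div_le_one (hφpos t ht)).2 (hψφC t ht.le).1⟩,
    ⟨C, fun t ht => (div_le_iff₀ (hψpos t ht.le)).2 (hψφC t ht.le).2⟩⟩
end

section
/- Let α₀, α₁ ∈ OR be such that the function α₀/α₁ is bounded on a neighbourhood of infinity, and let ψ belong to the class 𝓑 and be pseudoconcave in a neighbourhood of +∞. Then the function α defined by α(t) := α₀(t)·ψ(α₁(t)/α₀(t)) for t ≥ 1 belongs to OR. -/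
/-- The class `𝓑`: Borel measurable `ψ : (0,∞) → (0,∞)` that is bounded on each compact
subset of `(0,∞)` and such that `1/ψ` is bounded on every set `[r,∞)` with `r > 0`. -/
def InClassB (ψ : ℝ → ℝ) : Prop :=
  Measurable ((Set.Ioi (0:ℝ)).restrict ψ) ∧ (∀ t, 0 < t → 0 < ψ t) ∧
  (∀ K : Set ℝ, IsCompact K → K ⊆ Set.Ioi 0 → ∃ M : ℝ, ∀ t ∈ K, ψ t ≤ M) ∧
  (∀ r : ℝ, 0 < r → ∃ M : ℝ, ∀ t, r ≤ t → (ψ t)⁻¹ ≤ M)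

/-- `ψ` is pseudoconcave in a neighbourhood of `+∞`: there are `b > 0` and a concave
positive function `ψ₁` on `(b,∞)` such that `ψ/ψ₁` and `ψ₁/ψ` are bounded on `(b,∞)`. -/
def PseudoconcaveAtTop (ψ : ℝ → ℝ) : Prop :=
  ∃ b : ℝ, 0 < b ∧ ∃ ψ₁ : ℝ → ℝ,
    ConcaveOn ℝ (Set.Ioi b) ψ₁ ∧ (∀ t, b < t → 0 < ψ₁ t) ∧
    (∃ M : ℝ, ∀ t, b < t → ψ t / ψ₁ t ≤ M) ∧
    (∃ M : ℝ, ∀ t, b < t → ψ₁ t / ψ t ≤ M)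


/-! Write `u = α₁ / α₀`. For `l ∈ [1, b]` both `α₀ (l t) / α₀ t` and `u (l t) / u t` lie in a fixed
interval `[C⁻¹, C]`, so it suffices that `ψ s' / ψ s` is bounded above and below whenever
`s' / s ∈ [C⁻¹, C]` and `s, s'` lie in the range of `u`. That range is bounded away from `0`: on
`[1, T]` because O-regularly varying functions are bounded above and below on compact intervals,
and beyond `T` by the hypothesis on `α₀ / α₁`. For small `s'` the bound on `ψ` comes from the
`𝓑` conditions, for large `s'` from the comparable concave function `ψ₁`, which satisfies
`ψ₁ s' ≤ 2 C ψ₁ s` whenever `s' ≤ C s`. -/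

open Set

lemma inv_mem_Icc_inv {a c : ℝ} (hc : 0 < c) (ha : a ∈ Icc c⁻¹ c) : a⁻¹ ∈ Icc c⁻¹ c := by
  have ha₀ : 0 < a := (inv_pos.2 hc).trans_le ha.1
  exact ⟨inv_anti₀ ha₀ ha.2, (inv_le_comm₀ ha₀ hc).2 ha.1⟩

lemma mul_mem_Icc_inv {a b c d : ℝ} (hc : 0 < c) (hd : 0 < d) (ha : a ∈ Icc c⁻¹ c)
    (hb : b ∈ Icc d⁻¹ d) : a * b ∈ Icc (c * d)⁻¹ (c * d) := by
  have ha₀ : 0 ≤ a := (inv_pos.2 hc).le.trans ha.1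
  have hb₀ : 0 ≤ b := (inv_pos.2 hd).le.trans hb.1
  rw [mul_inv]
  exact ⟨mul_le_mul ha.1 hb.1 (inv_pos.2 hd).le ha₀, mul_le_mul ha.2 hb.2 hb₀ hc.le⟩

lemma div_mem_Icc_inv {a b c d : ℝ} (hc : 0 < c) (hd : 0 < d) (ha : a ∈ Icc c⁻¹ c)
    (hb : b ∈ Icc d⁻¹ d) : a / b ∈ Icc (c * d)⁻¹ (c * d) :=
  div_eq_mul_inv a b ▸ mul_mem_Icc_inv hc hd ha (inv_mem_Icc_inv hd hb)

lemma ConcaveOn.le_two_mul_mul_of_le_mul {f : ℝ → ℝ} {b C s s' : ℝ}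
    (hf : ConcaveOn ℝ (Ioi b) f) (hpos : ∀ t, b < t → 0 < f t) (hb : 0 ≤ b) (hC : 1 ≤ C)
    (hs : 2 * b < s) (hs' : b < s') (hs's : s' ≤ C * s) : f s' ≤ 2 * C * f s := by
  have secant {x y z : ℝ} (hx : b < x) (hz : b < z) (hxy : x < y) (hyz : y < z) :
      (z - y) * f x + (y - x) * f z ≤ (z - x) * f y := by
    have := hf.neg.secant_mono_aux1 hx hz hxy hyz
    simp only [Pi.neg_apply] at this
    linarith
  have hs₀ : 0 < s := by linarith
  have hfs := hpos s (by linarith)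
  refine le_of_mul_le_mul_left ?_ hs₀
  rcases lt_trichotomy s' s with hlt | rfl | hgt
  · have h := secant hs' (show b < 2 * s by linarith) hlt (by linarith)
    have hf2s := hpos (2 * s) (by linarith)
    nlinarith [mul_pos (sub_pos.2 hlt) hf2s, mul_pos (hb.trans_lt hs') hfs,
      mul_nonneg (sub_nonneg.2 hC) (mul_pos hs₀ hfs).le]
  · nlinarith
  · have h := secant (show b < s / 2 by linarith) hs' (by linarith) hgt
    have hfs2 := hpos (s / 2) (by linarith)
    nlinarith

lemma PseudoconcaveAtTop.exists_le_mul {ψ : ℝ → ℝ} (hψ : PseudoconcaveAtTop ψ)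
    (hpos : ∀ t, 0 < t → 0 < ψ t) {C : ℝ} (hC : 1 ≤ C) :
    ∃ b, 0 ≤ b ∧ ∃ K, ∀ s s', b < s → b < s' → s' ≤ C * s → ψ s' ≤ K * ψ s := by
  obtain ⟨b, hb, ψ₁, hconc, hψ₁pos, ⟨M₁, hM₁⟩, ⟨M₂, hM₂⟩⟩ := hψ
  refine ⟨2 * b, by positivity, M₁ * (2 * C) * M₂, fun s s' hs hs' hs's => ?_⟩
  have hs'b : b < s' := by linarith
  have hM₁pos : 0 ≤ M₁ :=
    (div_pos (hpos s' (hb.trans hs'b)) (hψ₁pos s' hs'b)).le.trans (hM₁ s' hs'b)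
  calc ψ s' ≤ M₁ * ψ₁ s' := (div_le_iff₀ (hψ₁pos s' hs'b)).1 (hM₁ s' hs'b)
    _ ≤ M₁ * (2 * C * ψ₁ s) := by
      gcongr
      exact hconc.le_two_mul_mul_of_le_mul hψ₁pos hb.le hC hs hs'b hs's
    _ ≤ M₁ * (2 * C * (M₂ * ψ s)) := by
      gcongr
      exact (div_le_iff₀ (hpos s (by linarith))).1 (hM₂ s (by linarith))
    _ = M₁ * (2 * C) * M₂ * ψ s := by ring

lemma InClassB.exists_le_mul {ψ : ℝ → ℝ} (hψ : InClassB ψ) (hpc : PseudoconcaveAtTop ψ)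
    {C r : ℝ} (hC : 1 ≤ C) (hr : 0 < r) :
    ∃ K, ∀ s s', r ≤ s → r ≤ s' → s' ≤ C * s → ψ s' ≤ K * ψ s := by
  obtain ⟨-, hpos, hcompact, hinv⟩ := hψ
  obtain ⟨b, hb, K, hK⟩ := hpc.exists_le_mul hpos hC
  obtain ⟨M, hM⟩ := hcompact (Icc r (C * b)) isCompact_Icc fun t ht => hr.trans_le ht.1
  obtain ⟨N, hN⟩ := hinv r hr
  refine ⟨max (M * N) K, fun s s' hs hs' hs's => ?_⟩
  have hψs := hpos s (hr.trans_le hs)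
  rcases le_or_gt s' (C * b) with hsmall | hlarge
  · have hψs'M : ψ s' ≤ M := hM s' ⟨hs', hsmall⟩
    have hM₀ : 0 ≤ M := (hpos s' (hr.trans_le hs')).le.trans hψs'M
    calc ψ s' ≤ M * (N * ψ s) :=
          hψs'M.trans (le_mul_of_one_le_right hM₀ ((inv_le_iff_one_le_mul₀ hψs).1 (hN s hs)))
      _ ≤ max (M * N) K * ψ s := by
          rw [← mul_assoc]
          gcongr
          exact le_max_left _ _
  · have hbs : b < s := lt_of_mul_lt_mul_left (hlarge.trans_le hs's) (by linarith)
    calc ψ s' ≤ K * ψ s := hK s s' hbs (by nlinarith) hs's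
      _ ≤ max (M * N) K * ψ s := by
          gcongr
          exact le_max_right _ _

lemma InClassB.exists_div_mem_Icc {ψ : ℝ → ℝ} (hψ : InClassB ψ) (hpc : PseudoconcaveAtTop ψ)
    {C r : ℝ} (hC : 1 ≤ C) (hr : 0 < r) :
    ∃ K, 1 ≤ K ∧ ∀ s s', r ≤ s → r ≤ s' → s' / s ∈ Icc C⁻¹ C → ψ s' / ψ s ∈ Icc K⁻¹ K := by
  obtain ⟨K, hK⟩ := hψ.exists_le_mul hpc hC hr
  refine ⟨max K 1, le_max_right _ _, fun s s' hs hs' hs's => ?_⟩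
  have hs₀ := hr.trans_le hs
  have hψs := hψ.2.1 s hs₀
  have hψs' := hψ.2.1 s' (hr.trans_le hs')
  have hK' : 0 < max K 1 := zero_lt_one.trans_le (le_max_right _ _)
  have hs's_le : s' ≤ C * s := (div_le_iff₀ hs₀).1 hs's.2
  have hss'_le : s ≤ C * s' :=
    (inv_mul_le_iff₀ (show (0 : ℝ) < C by linarith)).1 ((le_div_iff₀ hs₀).1 hs's.1)
  have hup : ψ s' ≤ max K 1 * ψ s := by
    grw [hK s s' hs hs' hs's_le, ← le_max_left K 1]
  have hdown : ψ s ≤ max K 1 * ψ s' := by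
    grw [hK s' s hs' hs hss'_le, ← le_max_left K 1]
  exact ⟨(le_div_iff₀ hψs).2 ((inv_mul_le_iff₀ hK').2 hdown), (div_le_iff₀ hψs).2 hup⟩

lemma IsOR.exists_div_mem_Icc_of_le {α : ℝ → ℝ} (hα : IsOR α) (T : ℝ) :
    ∃ C, 0 < C ∧ ∀ t, 1 ≤ t → t ≤ T → α t / α 1 ∈ Icc C⁻¹ C := by
  obtain ⟨-, hpos, b, hb, c, hc, hbc⟩ := hα
  have hc₀ : 0 < c := by linarith
  have key (n : ℕ) : ∀ t, 1 ≤ t → t ≤ b ^ n → α t / α 1 ∈ Icc (c ^ n)⁻¹ (c ^ n) := by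
    induction n with
    | zero =>
      intro t ht htb
      obtain rfl : t = 1 := le_antisymm (by simpa using htb) ht
      simp [div_self (hpos 1 le_rfl).ne']
    | succ n ih =>
      intro t ht htb
      rcases le_or_gt t b with htb' | hbt
      · have h := hbc 1 le_rfl t ht htb'
        rw [mul_one] at h
        exact Icc_subset_Icc (inv_anti₀ hc₀ (le_self_pow₀ hc n.succ_ne_zero))
          (le_self_pow₀ hc n.succ_ne_zero) h
      · have hb₀ : 0 < b := by linarith
        have ht' : 1 ≤ t / b := (one_le_div hb₀).2 hbt.le
        have h := mul_mem_Icc_inv hc₀ (pow_pos hc₀ n) (hbc (t / b) ht' b hb.le le_rfl)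
          (ih (t / b) ht' ((div_le_iff₀ hb₀).2 (by rwa [← pow_succ])))
        rwa [mul_div_cancel₀ t hb₀.ne', div_mul_div_cancel₀ (hpos _ ht').ne', ← pow_succ'] at h
  obtain ⟨n, hn⟩ := pow_unbounded_of_one_lt T hb
  exact ⟨c ^ n, pow_pos hc₀ n, fun t ht htT => key n t ht (htT.trans hn.le)⟩

lemma IsOR.exists_pos_le_div {α₀ α₁ : ℝ → ℝ} (hα₀ : IsOR α₀) (hα₁ : IsOR α₁)
    (hbdd : ∃ T : ℝ, 1 ≤ T ∧ ∃ M : ℝ, ∀ t, T ≤ t → α₀ t / α₁ t ≤ M) :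
    ∃ r, 0 < r ∧ ∀ t, 1 ≤ t → r ≤ α₁ t / α₀ t := by
  obtain ⟨T, hT, M, hM⟩ := hbdd
  obtain ⟨C₀, hC₀, hC₀T⟩ := hα₀.exists_div_mem_Icc_of_le T
  obtain ⟨C₁, hC₁, hC₁T⟩ := hα₁.exists_div_mem_Icc_of_le T
  have hu (t : ℝ) (ht : 1 ≤ t) : 0 < α₁ t / α₀ t := div_pos (hα₁.2.1 t ht) (hα₀.2.1 t ht)
  have hM₀ : 0 < M := (inv_pos.2 (hu T hT)).trans_le (by rw [inv_div]; exact hM T le_rfl)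
  refine ⟨min ((C₁ * C₀)⁻¹ * (α₁ 1 / α₀ 1)) M⁻¹, lt_min (by have := hu 1 le_rfl; positivity)
    (inv_pos.2 hM₀), fun t ht => ?_⟩
  rcases le_or_gt t T with htT | hTt
  · have h := (div_mem_Icc_inv hC₁ hC₀ (hC₁T t ht htT) (hC₀T t ht htT)).1
    rw [div_div_div_comm, le_div_iff₀ (hu 1 le_rfl)] at h
    exact (min_le_left _ _).trans h
  · have h : (α₁ t / α₀ t)⁻¹ ≤ M := by rw [inv_div]; exact hM t hTt.le
    exact (min_le_right _ _).trans ((inv_le_comm₀ (hu t ht) hM₀).1 h)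

/-- If `α₀, α₁ ∈ OR`, `α₀/α₁` is bounded on a neighbourhood of infinity,
and `ψ ∈ 𝓑` is pseudoconcave in a neighbourhood of `+∞`, then
`t ↦ α₀(t)·ψ(α₁(t)/α₀(t))` belongs to OR. -/
theorem stmt_16 (α₀ α₁ : ℝ → ℝ) (hα₀ : IsOR α₀) (hα₁ : IsOR α₁)
    (hbdd : ∃ T : ℝ, 1 ≤ T ∧ ∃ M : ℝ, ∀ t, T ≤ t → α₀ t / α₁ t ≤ M)
    (ψ : ℝ → ℝ) (hψB : InClassB ψ) (hψpc : PseudoconcaveAtTop ψ) :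
    IsOR (fun t => α₀ t * ψ (α₁ t / α₀ t)) := by
  obtain ⟨r, hr, hur⟩ := hα₀.exists_pos_le_div hα₁ hbdd
  obtain ⟨hm₀, hpos₀, b₀, hb₀, c₀, hc₀, h₀⟩ := hα₀
  obtain ⟨hm₁, hpos₁, b₁, hb₁, c₁, hc₁, h₁⟩ := hα₁
  obtain ⟨K, hK, hψK⟩ := hψB.exists_div_mem_Icc hψpc (one_le_mul_of_one_le_of_one_le hc₁ hc₀) hr
  have hu (t : Ici (1 : ℝ)) : 0 < α₁ t / α₀ t := div_pos (hpos₁ t t.2) (hpos₀ t t.2)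
  refine ⟨?_, fun t ht => mul_pos (hpos₀ t ht) (hψB.2.1 _ (hu ⟨t, ht⟩)), min b₀ b₁,
    lt_min hb₀ hb₁, c₀ * K, one_le_mul_of_one_le_of_one_le hc₀ hK, fun t ht l hl hlb => ?_⟩
  · exact hm₀.mul (hψB.1.comp (hm₁.div hm₀).subtype_mk : Measurable fun t : Ici (1 : ℝ) =>
      ψ (⟨α₁ t / α₀ t, hu t⟩ : Ioi (0 : ℝ)))
  have hlt : 1 ≤ l * t := one_le_mul_of_one_le_of_one_le hl ht
  have hα₀lt := h₀ t ht l hl (hlb.trans (min_le_left _ _))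
  have hult := div_mem_Icc_inv (by linarith) (by linarith)
    (h₁ t ht l hl (hlb.trans (min_le_right _ _))) hα₀lt
  rw [div_div_div_comm] at hult
  show α₀ (l * t) * ψ (α₁ (l * t) / α₀ (l * t)) / (α₀ t * ψ (α₁ t / α₀ t)) ∈
    Icc (c₀ * K)⁻¹ (c₀ * K)
  rw [mul_div_mul_comm]
  exact mul_mem_Icc_inv (by linarith) (by linarith) hα₀lt (hψK _ _ (hur t ht) (hur _ hlt) hult)
end

section
/- Let α ∈ OR and s ∈ ℝ. Then the series Σ_{k=0}^∞ α²(2ᵏ)·4^{−sk} converges if and only if ∫₁^∞ α²(t)/t^{2s+1} dt < ∞. -/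
open MeasureTheory

/-! Iterating the OR condition shows that `α (l * t)` and `α t` agree up to a fixed factor for
all dilations `l ∈ [1, 2]`. Since `t ^ (2s+1)` also varies by at most the factor `2 ^ |2s+1|`
over a dyadic block `[2ᵏ, 2ᵏ⁺¹)`, the integrand is comparable there to its value at `2ᵏ`, so the
integral over the block is comparable to `α²(2ᵏ) · 2ᵏ / (2ᵏ)^(2s+1) = α²(2ᵏ) · 4^(-sk)`. Summing
over the blocks gives the equivalence. -/

open Set

def DilationBounded (α : ℝ → ℝ) (L C : ℝ) : Prop :=
  ∀ t, 1 ≤ t → ∀ l ∈ Icc 1 L, α (l * t) ≤ C * α t ∧ α t ≤ C * α (l * t)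

namespace DilationBounded

variable {α : ℝ → ℝ} {L L' C C' : ℝ}

theorem mono (h : DilationBounded α L C) (hL : L' ≤ L) : DilationBounded α L' C :=
  fun t ht l hl => h t ht l ⟨hl.1, hl.2.trans hL⟩

theorem mul (h : DilationBounded α L C) (h' : DilationBounded α L' C') (hL : 1 ≤ L)
    (hL' : 1 ≤ L') (hC : 0 ≤ C) (hC' : 0 ≤ C') : DilationBounded α (L * L') (C * C') := by
  intro t ht l ⟨hl, hlL⟩
  set l₁ := min l L
  have hl₁ : l₁ ∈ Icc 1 L := ⟨le_min hl hL, min_le_right l L⟩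
  have hl₁_pos : 0 < l₁ := zero_lt_one.trans_le hl₁.1
  have hl₂ : l / l₁ ∈ Icc 1 L' := by
    refine ⟨(one_le_div hl₁_pos).2 (min_le_left l L), (div_le_iff₀ hl₁_pos).2 ?_⟩
    rcases le_total l L with hl' | hl'
    · simp only [l₁, min_eq_left hl']; nlinarith
    · simp only [l₁, min_eq_right hl']; linarith
  have hl₂t : 1 ≤ l / l₁ * t := one_le_mul_of_one_le_of_one_le hl₂.1 ht
  have hsplit : l₁ * (l / l₁ * t) = l * t := by field_simp
  obtain ⟨h₁, h₂⟩ := h _ hl₂t l₁ hl₁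
  obtain ⟨h₃, h₄⟩ := h' t ht _ hl₂
  rw [hsplit] at h₁ h₂
  constructor
  · calc α (l * t) ≤ C * (C' * α t) := h₁.trans (by gcongr)
      _ = C * C' * α t := by ring
  · calc α t ≤ C' * (C * α (l * t)) := h₄.trans (by gcongr)
      _ = C * C' * α (l * t) := by ring

theorem pow (h : DilationBounded α L C) (hL : 1 ≤ L) (hC : 0 ≤ C) (n : ℕ) :
    DilationBounded α (L ^ n) (C ^ n) := by
  induction n with
  | zero =>
    intro t _ l hl
    obtain rfl : l = 1 := le_antisymm (by simpa using hl.2) hl.1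
    simp
  | succ n ih =>
    rw [pow_succ, pow_succ]
    exact ih.mul h (one_le_pow₀ hL) hL (pow_nonneg hC n) hC

end DilationBounded

namespace IsOR

variable {α : ℝ → ℝ}

theorem pos (hα : IsOR α) {t : ℝ} (ht : 1 ≤ t) : 0 < α t := hα.2.1 t ht

theorem exists_dilationBounded (hα : IsOR α) (L : ℝ) : ∃ C, DilationBounded α L C := by
  obtain ⟨-, -, b, hb, c, hc, hbc⟩ := id hα
  have hc_pos : 0 < c := zero_lt_one.trans_le hc
  have hb_bound : DilationBounded α b c := by
    intro t ht l ⟨hl, hlb⟩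
    have hαt := hα.pos ht
    obtain ⟨h₁, h₂⟩ := hbc t ht l hl hlb
    exact ⟨(div_le_iff₀ hαt).1 h₂, (inv_mul_le_iff₀ hc_pos).1 ((le_div_iff₀ hαt).1 h₁)⟩
  obtain ⟨n, hn⟩ := pow_unbounded_of_one_lt L hb
  exact ⟨c ^ n, (hb_bound.pow hb.le (zero_le_one.trans hc) n).mono hn.le⟩

end IsOR

theorem Real.rpow_le_two_rpow_abs_s19 {u : ℝ} (hu : u ∈ Icc 1 2) (r : ℝ) : u ^ r ≤ 2 ^ |r| :=
  calc u ^ r ≤ u ^ |r| := Real.rpow_le_rpow_of_exponent_le hu.1 (le_abs_self r)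
    _ ≤ 2 ^ |r| := Real.rpow_le_rpow (zero_le_one.trans hu.1) hu.2 (abs_nonneg r)

theorem DilationBounded.sq_div_rpow_le {α : ℝ → ℝ} {C : ℝ} (h : DilationBounded α 2 C)
    (hα : ∀ t, 1 ≤ t → 0 ≤ α t) {a t : ℝ} (ha : 1 ≤ a) (ht : t ∈ Icc a (2 * a)) (r : ℝ) :
    α t ^ 2 / t ^ r ≤ C ^ 2 * 2 ^ |r| * (α a ^ 2 / a ^ r) ∧
      α a ^ 2 / a ^ r ≤ C ^ 2 * 2 ^ |r| * (α t ^ 2 / t ^ r) := by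
  have ha_pos : 0 < a := zero_lt_one.trans_le ha
  set x := t / a
  have hx : x ∈ Icc 1 2 := ⟨(one_le_div ha_pos).2 ht.1, (div_le_iff₀ ha_pos).2 ht.2⟩
  have hx_pos : 0 < x := zero_lt_one.trans_le hx.1
  have hxa : x * a = t := div_mul_cancel₀ t ha_pos.ne'
  obtain ⟨h₁, h₂⟩ := h a ha x hx
  rw [hxa] at h₁ h₂
  have hαa : 0 ≤ α a := hα a ha
  have hαt : 0 ≤ α t := hα t (ha.trans ht.1)
  have ht_rpow : t ^ r = x ^ r * a ^ r := by rw [← hxa, Real.mul_rpow hx_pos.le ha_pos.le]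
  constructor
  · calc α t ^ 2 / t ^ r = α t ^ 2 * x ^ (-r) / a ^ r := by
          rw [ht_rpow, Real.rpow_neg hx_pos.le]; field_simp
      _ ≤ (C * α a) ^ 2 * 2 ^ |r| / a ^ r := by
          gcongr
          simpa using Real.rpow_le_two_rpow_abs_s19 hx (-r)
      _ = C ^ 2 * 2 ^ |r| * (α a ^ 2 / a ^ r) := by ring
  · calc α a ^ 2 / a ^ r = α a ^ 2 * x ^ r / t ^ r := by
          rw [ht_rpow]; field_simp
      _ ≤ (C * α t) ^ 2 * 2 ^ |r| / t ^ r := by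
          gcongr
          exacts [(Real.rpow_pos_of_pos (ha_pos.trans_le ht.1) r).le,
            Real.rpow_le_two_rpow_abs_s19 hx r]
      _ = C ^ 2 * 2 ^ |r| * (α t ^ 2 / t ^ r) := by ring

theorem Ici_one_eq_iUnion_Ico_two_pow :
    Ici (1 : ℝ) = ⋃ k : ℕ, Ico (2 ^ k) (2 ^ (k + 1)) := by
  ext t
  simp only [mem_Ici, mem_iUnion, mem_Ico]
  refine ⟨fun ht => exists_nat_pow_near ht one_lt_two, ?_⟩
  rintro ⟨k, hk, -⟩
  exact (one_le_pow₀ one_le_two).trans hk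

theorem lintegral_Ici_one_eq_tsum_Ico_two_pow (μ : Measure ℝ) (f : ℝ → ENNReal) :
    ∫⁻ t in Ici 1, f t ∂μ = ∑' k : ℕ, ∫⁻ t in Ico (2 ^ k) (2 ^ (k + 1)), f t ∂μ := by
  rw [Ici_one_eq_iUnion_Ico_two_pow, lintegral_iUnion (fun _ => measurableSet_Ico)]
  simpa [Order.succ_eq_add_one] using
    (pow_right_mono₀ (one_le_two : (1 : ℝ) ≤ 2)).pairwise_disjoint_on_Ico_succ

theorem lintegral_Ici_one_lt_top_iff_of_dyadic (μ : Measure ℝ) {f : ℝ → ENNReal}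
    {a : ℕ → ENNReal} {D : ENNReal} (hD : D ≠ ⊤)
    (h : ∀ k : ℕ, ∀ t ∈ Ico ((2 : ℝ) ^ k) (2 ^ (k + 1)), f t ≤ D * a k ∧ a k ≤ D * f t) :
    ∫⁻ t in Ici 1, f t ∂μ < ⊤ ↔ ∑' k, a k * μ (Ico (2 ^ k) (2 ^ (k + 1))) < ⊤ := by
  have hblock : ∀ k : ℕ, ∫⁻ t in Ico (2 ^ k) (2 ^ (k + 1)), f t ∂μ ≤
        D * (a k * μ (Ico (2 ^ k) (2 ^ (k + 1)))) ∧
      a k * μ (Ico (2 ^ k) (2 ^ (k + 1))) ≤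
        D * ∫⁻ t in Ico (2 ^ k) (2 ^ (k + 1)), f t ∂μ := by
    intro k
    rw [← setLIntegral_const, ← lintegral_const_mul' _ _ hD, ← lintegral_const_mul' _ _ hD]
    exact ⟨setLIntegral_mono_ae' measurableSet_Ico (.of_forall fun t ht => (h k t ht).1),
      setLIntegral_mono_ae' measurableSet_Ico (.of_forall fun t ht => (h k t ht).2)⟩
  rw [lintegral_Ici_one_eq_tsum_Ico_two_pow]
  constructor
  · intro hf
    calc _ ≤ D * ∑' k, ∫⁻ t in Ico (2 ^ k) (2 ^ (k + 1)), f t ∂μ := by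
          rw [← ENNReal.tsum_mul_left]; exact ENNReal.tsum_le_tsum fun k => (hblock k).2
      _ < ⊤ := ENNReal.mul_lt_top hD.lt_top hf
  · intro ha
    calc _ ≤ D * ∑' k, a k * μ (Ico (2 ^ k) (2 ^ (k + 1))) := by
          rw [← ENNReal.tsum_mul_left]; exact ENNReal.tsum_le_tsum fun k => (hblock k).1
      _ < ⊤ := ENNReal.mul_lt_top hD.lt_top ha

theorem summable_iff_tsum_ofReal_lt_top {ι : Type*} {f : ι → ℝ} (hf : ∀ i, 0 ≤ f i) :
    Summable f ↔ ∑' i, ENNReal.ofReal (f i) < ⊤ := by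
  refine ⟨Summable.tsum_ofReal_lt_top, fun h => ?_⟩
  simpa only [ENNReal.toReal_ofReal (hf _)] using ENNReal.summable_toReal h.ne

theorem two_pow_div_rpow_eq_four_rpow (k : ℕ) (s : ℝ) :
    (2 : ℝ) ^ k / ((2 : ℝ) ^ k) ^ (2 * s + 1) = (4 : ℝ) ^ (-(s * k)) := by
  rw [← Real.rpow_natCast, ← Real.rpow_mul zero_le_two, ← Real.rpow_sub two_pos,
    show (4 : ℝ) = 2 ^ (2 : ℝ) by norm_num, ← Real.rpow_mul zero_le_two]
  ring_nf

/-- For `α ∈ OR` and `s ∈ ℝ`, the series `Σ_{k=0}^∞ α²(2ᵏ)·4^{−sk}`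
converges if and only if `∫₁^∞ α²(t)/t^{2s+1} dt < ∞`. -/
theorem stmt_19 (α : ℝ → ℝ) (hα : IsOR α) (s : ℝ) :
    Summable (fun k : ℕ => α ((2:ℝ) ^ k) ^ 2 * (4:ℝ) ^ (-(s * (k:ℝ)))) ↔
    (∫⁻ t in Set.Ici (1:ℝ), ENNReal.ofReal (α t ^ 2 / t ^ (2 * s + 1))) < ⊤ := by
  obtain ⟨C, hC⟩ := hα.exists_dilationBounded 2
  have hblock : ∀ k : ℕ, ∀ t ∈ Ico ((2 : ℝ) ^ k) (2 ^ (k + 1)),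
      ENNReal.ofReal (α t ^ 2 / t ^ (2 * s + 1)) ≤ ENNReal.ofReal (C ^ 2 * 2 ^ |2 * s + 1|) *
          ENNReal.ofReal (α (2 ^ k) ^ 2 / (2 ^ k) ^ (2 * s + 1)) ∧
        ENNReal.ofReal (α (2 ^ k) ^ 2 / (2 ^ k) ^ (2 * s + 1)) ≤
          ENNReal.ofReal (C ^ 2 * 2 ^ |2 * s + 1|) *
            ENNReal.ofReal (α t ^ 2 / t ^ (2 * s + 1)) := by
    intro k t ht
    have hD : 0 ≤ C ^ 2 * (2 : ℝ) ^ |2 * s + 1| := by positivity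
    obtain ⟨h₁, h₂⟩ := hC.sq_div_rpow_le (fun _ ht => (hα.pos ht).le) (one_le_pow₀ one_le_two)
      ⟨ht.1, by rw [← pow_succ']; exact ht.2.le⟩ (2 * s + 1)
    simp only [← ENNReal.ofReal_mul hD]
    exact ⟨ENNReal.ofReal_le_ofReal h₁, ENNReal.ofReal_le_ofReal h₂⟩
  have hterm : ∀ k : ℕ, ENNReal.ofReal (α (2 ^ k) ^ 2 / (2 ^ k) ^ (2 * s + 1)) *
      volume (Ico ((2 : ℝ) ^ k) (2 ^ (k + 1))) =
        ENNReal.ofReal (α ((2:ℝ) ^ k) ^ 2 * (4:ℝ) ^ (-(s * (k:ℝ)))) := by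
    intro k
    rw [Real.volume_Ico, ← ENNReal.ofReal_mul (by positivity), pow_succ, ← two_pow_div_rpow_eq_four_rpow]
    ring_nf
  rw [lintegral_Ici_one_lt_top_iff_of_dyadic volume ENNReal.ofReal_ne_top hblock,
    summable_iff_tsum_ofReal_lt_top fun k => by positivity]
  simp only [hterm]
end
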